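/- arXiv:2305.10164 — 6 statements merged into one kernel-verified Lean document; each statement's English description precedes it below -/
import Mathlib

section
/- Let (b₁, …, b_T) be an arbitrary finite dialogue (b_t ∈ [0,1] for all t) that does not violate certainty acquiescence. Then (b₁, …, b_T) is a rational dialogue: there exists a Bayesian opinion framework (Ω, π, A, P, Q) with first speaker p and a state ω* ∈ Ω such that the Bayesian dialogue at the fixed state ω* produces the opinions (r₁, r₂, …) with r_t = b_t for t = 1, …, T. Moreover, consensus is reached at time T at the value b_T, i.e., r_t = b_T for all t ≥ T. -/
/- Formalization of "Rational Dialogues" (Geanakoplos–Polemarchakis).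

A Bayesian opinion framework on a finite type `Ω` consists of a strictly
positive probability `π` on `Ω`, an event `A : Finset Ω`, and two partitions
given by their cell maps `P Q : Ω → Finset Ω`.  The agents speak alternately;
the listener refines her partition by the speaker's announced opinion
function.  `dialogue π A P Q pFirst ω₀ t` is the opinion announced at
(0-indexed) time `t` at the fixed state `ω₀`, where `pFirst = true` means
agent `p` (whose partition is `P`) speaks first. -/

namespace RationalDialogues

variable {Ω : Type}

/-- The measure of a finite set of states. -/
noncomputable def mass [Fintype Ω] (π : Ω → ℝ) (s : Finset Ω) : ℝ :=
  ∑ ω ∈ s, π ω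

/-- `C` is the cell map of a partition of `Ω`: every point lies in its own
cell, and any point of a cell has that same cell. -/
def IsPartition [Fintype Ω] (C : Ω → Finset Ω) : Prop :=
  (∀ ω, ω ∈ C ω) ∧ ∀ ω ω', ω' ∈ C ω → C ω' = C ω

/-- The Bayesian opinion of the agent with cell map `C` at state `ω`:
the conditional probability of `A` given the cell `C ω`. -/
noncomputable def opin [Fintype Ω] [DecidableEq Ω] (π : Ω → ℝ) (A : Finset Ω)
    (C : Ω → Finset Ω) (ω : Ω) : ℝ :=
  mass π (C ω ∩ A) / mass π (C ω)

open Classical in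
/-- The refinement `D ∨ c_A` of the listener's partition `D` by the speaker's
announced opinion function (the speaker's cell map being `C`):
`[D ∨ c_A](ω) = D(ω) ∩ {ω' : opinion_C(ω') = opinion_C(ω)}`. -/
noncomputable def refineBy [Fintype Ω] [DecidableEq Ω] (π : Ω → ℝ) (A : Finset Ω)
    (C D : Ω → Finset Ω) : Ω → Finset Ω :=
  fun ω => (D ω).filter (fun ω' => opin π A C ω' = opin π A C ω)

/-- Agent `p` is the speaker at (0-indexed) time `n`. -/
def pSpeaksAt (pFirst : Bool) (n : ℕ) : Prop := (pFirst = true ↔ Even n)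

open Classical in
/-- The pair of partitions (cell maps of `p` and `q`) at (0-indexed) time `n`,
starting from `(P, Q)` at time `0`, where at each time the current speaker's
opinion function refines the listener's partition for the next period. -/
noncomputable def partsAt [Fintype Ω] [DecidableEq Ω] (π : Ω → ℝ) (A : Finset Ω)
    (P Q : Ω → Finset Ω) (pFirst : Bool) : ℕ → (Ω → Finset Ω) × (Ω → Finset Ω)
  | 0 => (P, Q)
  | n + 1 =>
      let C := partsAt π A P Q pFirst n
      if pSpeaksAt pFirst n then (C.1, refineBy π A C.1 C.2)
      else (refineBy π A C.2 C.1, C.2)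

open Classical in
/-- The Bayesian dialogue at the fixed state `ω₀`: the opinion announced at
(0-indexed) time `n` by the time-`n` speaker, given his/her current cell. -/
noncomputable def dialogue [Fintype Ω] [DecidableEq Ω] (π : Ω → ℝ) (A : Finset Ω)
    (P Q : Ω → Finset Ω) (pFirst : Bool) (ω₀ : Ω) (n : ℕ) : ℝ :=
  if pSpeaksAt pFirst n then opin π A (partsAt π A P Q pFirst n).1 ω₀
  else opin π A (partsAt π A P Q pFirst n).2 ω₀

/-- `(π, P, Q)` is a Bayesian opinion framework: `π` is a strictly positive
probability on the finite type `Ω` and `P`, `Q` are partitions. -/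
def IsBOF [Fintype Ω] (π : Ω → ℝ) (P Q : Ω → Finset Ω) : Prop :=
  (∀ ω, 0 < π ω) ∧ (∑ ω, π ω = 1) ∧ IsPartition P ∧ IsPartition Q

end RationalDialogues

open RationalDialogues

/-!
By induction on the length of the dialogue, keeping the invariant that the first speaker's
initial opinion is the same at every state, so that his first announcement tells the listener
nothing.

To prepend a value `c ∈ (0, 1)` to a realized dialogue `(Γ, P', Q')` whose first value is also in
`(0, 1)`, attach to every state of `Γ` two padding states, one inside and one outside the event,
weighted so that every union of these fibres has conditional probability `c`. The new first
speaker knows `Q'` up to the padding, so he announces `c` everywhere; the new second speaker knows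
`P'` on `Γ` and everything on the padding. Her announcement is the old first (uncertain) opinion
on `Γ` but `0` or `1` on the padding, so it splits the padding off, and from then on the dialogue
on `Γ` is the old one with the roles swapped.

Constant dialogues, and dialogues that become certain after one step, are realized on at most
two states.
-/

namespace RationalDialogues

section Cells

variable {Ω : Type} [Fintype Ω]

theorem isPartition_univ : IsPartition fun _ : Ω => (Finset.univ : Finset Ω) :=
  ⟨fun _ => Finset.mem_univ _, fun _ _ _ => rfl⟩

theorem isPartition_singleton : IsPartition fun ω : Ω => ({ω} : Finset Ω) :=
  ⟨Finset.mem_singleton_self, fun _ _ h => by rw [Finset.mem_singleton.1 h]⟩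

end Cells

section Dynamics

variable {Ω : Type} [Fintype Ω] [DecidableEq Ω] {π : Ω → ℝ} {A : Finset Ω}

theorem opin_singleton (A : Finset Ω) {ω : Ω} (hω : π ω ≠ 0) :
    opin π A (fun ω => {ω}) ω = if ω ∈ A then 1 else 0 := by
  by_cases h : ω ∈ A <;> simp [opin, mass, h, hω]

theorem refineBy_eq_self {C D : Ω → Finset Ω}
    (h : ∀ ω, ∀ ω' ∈ D ω, opin π A C ω' = opin π A C ω) : refineBy π A C D = D :=
  funext fun ω => Finset.filter_true_of_mem (h ω)

theorem refineBy_self {C : Ω → Finset Ω} (hC : IsPartition C) : refineBy π A C C = C :=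
  refineBy_eq_self fun ω ω' hω' => by rw [opin, opin, hC.2 ω ω' hω']

theorem partsAt_true_succ (P Q : Ω → Finset Ω) (n : ℕ) :
    partsAt π A P Q true (n + 1) = (partsAt π A (refineBy π A P Q) P true n).swap := by
  induction n with
  | zero => simp [partsAt, pSpeaksAt]
  | succ n ih =>
    rw [partsAt, ih, partsAt]
    by_cases hn : Even n
    · have hn' : ¬ Even (n + 1) := by simpa [Nat.even_add_one] using hn
      simp [pSpeaksAt, hn, hn']
    · have hn' : Even (n + 1) := by simpa [Nat.even_add_one] using hn
      simp [pSpeaksAt, hn, hn']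

theorem dialogue_zero (P Q : Ω → Finset Ω) (ω : Ω) :
    dialogue π A P Q true ω 0 = opin π A P ω := by
  simp [dialogue, pSpeaksAt, partsAt]

theorem dialogue_succ (P Q : Ω → Finset Ω) (ω : Ω) (n : ℕ) :
    dialogue π A P Q true ω (n + 1) = dialogue π A (refineBy π A P Q) P true ω n := by
  by_cases hn : Even n
  · have hn' : ¬ Even (n + 1) := by simpa [Nat.even_add_one] using hn
    simp [dialogue, pSpeaksAt, partsAt_true_succ, hn, hn']
  · have hn' : Even (n + 1) := by simpa [Nat.even_add_one] using hn
    simp [dialogue, pSpeaksAt, partsAt_true_succ, hn, hn']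

theorem dialogue_succ_of_opin_const {P : Ω → Finset Ω} (Q : Ω → Finset Ω) {r : ℝ}
    (hP : ∀ ω, opin π A P ω = r) (ω : Ω) (n : ℕ) :
    dialogue π A P Q true ω (n + 1) = dialogue π A Q P true ω n := by
  rw [dialogue_succ, refineBy_eq_self fun ω ω' _ => by rw [hP, hP]]

theorem dialogue_self {C : Ω → Finset Ω} (hC : IsPartition C) (ω : Ω) (n : ℕ) :
    dialogue π A C C true ω n = opin π A C ω := by
  induction n with
  | zero => exact dialogue_zero C C ω
  | succ n ih => rw [dialogue_succ, refineBy_self hC, ih]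

theorem opin_const_mul {c : ℝ} (hc : c ≠ 0) (π : Ω → ℝ) (A : Finset Ω) :
    opin (fun ω => c * π ω) A = opin π A := by
  funext C ω
  simp only [opin, mass, ← Finset.mul_sum, mul_div_mul_left _ _ hc]

theorem dialogue_const_mul {c : ℝ} (hc : c ≠ 0) (π : Ω → ℝ) (A : Finset Ω) :
    dialogue (fun ω => c * π ω) A = dialogue π A := by
  have hrefine : refineBy (fun ω => c * π ω) A = refineBy π A := by
    funext C D
    unfold refineBy
    rw [opin_const_mul hc]
  have hparts : partsAt (fun ω => c * π ω) A = partsAt π A := by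
    funext P Q b n
    induction n with
    | zero => rfl
    | succ n ih => simp only [partsAt, ih, hrefine]
  funext P Q b ω n
  simp only [dialogue, hparts, opin_const_mul hc]

end Dynamics

section Sum

variable {Γ Δ : Type}

def sumCells (C : Γ → Finset Γ) (D : Δ → Finset Δ) : Γ ⊕ Δ → Finset (Γ ⊕ Δ) :=
  Sum.elim (fun y => (C y).map .inl) (fun w => (D w).map .inr)

variable [Fintype Γ] [Fintype Δ]

theorem isPartition_sumCells {C : Γ → Finset Γ} {D : Δ → Finset Δ} (hC : IsPartition C)
    (hD : IsPartition D) : IsPartition (sumCells C D) := by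
  refine ⟨?_, ?_⟩
  · rintro (y | w)
    · simpa [sumCells] using hC.1 y
    · simpa [sumCells] using hD.1 w
  · rintro (y | w) (z | z) h <;> simp [sumCells] at h ⊢
    · exact hC.2 y z h
    · exact hD.2 w z h

variable [DecidableEq Γ] [DecidableEq Δ] {π₁ : Γ → ℝ} {π₂ : Δ → ℝ} {A₁ : Finset Γ}
  {A₂ : Finset Δ}

theorem opin_sumCells_inl (C : Γ → Finset Γ) (D : Δ → Finset Δ) (y : Γ) :
    opin (Sum.elim π₁ π₂) (A₁.disjSum A₂) (sumCells C D) (.inl y) = opin π₁ A₁ C y := by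
  have h : (C y).map .inl ∩ A₁.disjSum A₂ = (C y ∩ A₁).map .inl := by
    ext (z | z) <;> simp
  simp only [opin, mass, sumCells, Sum.elim_inl, h, Finset.sum_map, Function.Embedding.inl_apply]

theorem opin_sumCells_inr (C : Γ → Finset Γ) (D : Δ → Finset Δ) (w : Δ) :
    opin (Sum.elim π₁ π₂) (A₁.disjSum A₂) (sumCells C D) (.inr w) = opin π₂ A₂ D w := by
  have h : (D w).map .inr ∩ A₁.disjSum A₂ = (D w ∩ A₂).map .inr := by
    ext (z | z) <;> simp
  simp only [opin, mass, sumCells, Sum.elim_inr, h, Finset.sum_map, Function.Embedding.inr_apply]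

theorem refineBy_sumCells (C C' : Γ → Finset Γ) (D D' : Δ → Finset Δ) :
    refineBy (Sum.elim π₁ π₂) (A₁.disjSum A₂) (sumCells C D) (sumCells C' D') =
      sumCells (refineBy π₁ A₁ C C') (refineBy π₂ A₂ D D') := by
  funext u
  ext v
  rcases u with y | w <;> rcases v with z | z <;>
    simp only [refineBy, Finset.mem_filter, opin_sumCells_inl, opin_sumCells_inr] <;>
    simp [sumCells, refineBy]

theorem partsAt_sumCells (P₁ Q₁ : Γ → Finset Γ) (P₂ Q₂ : Δ → Finset Δ) (b : Bool) (n : ℕ) :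
    partsAt (Sum.elim π₁ π₂) (A₁.disjSum A₂) (sumCells P₁ P₂) (sumCells Q₁ Q₂) b n =
      (sumCells (partsAt π₁ A₁ P₁ Q₁ b n).1 (partsAt π₂ A₂ P₂ Q₂ b n).1,
        sumCells (partsAt π₁ A₁ P₁ Q₁ b n).2 (partsAt π₂ A₂ P₂ Q₂ b n).2) := by
  induction n with
  | zero => rfl
  | succ n ih =>
    simp only [partsAt, ih]
    split_ifs <;> simp [refineBy_sumCells]

theorem dialogue_sumCells_inl (P₁ Q₁ : Γ → Finset Γ) (P₂ Q₂ : Δ → Finset Δ) (b : Bool)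
    (y : Γ) (n : ℕ) :
    dialogue (Sum.elim π₁ π₂) (A₁.disjSum A₂) (sumCells P₁ P₂) (sumCells Q₁ Q₂) b (.inl y) n =
      dialogue π₁ A₁ P₁ Q₁ b y n := by
  simp only [dialogue, partsAt_sumCells, opin_sumCells_inl]

end Sum

section Padding

variable {Γ : Type}

def padFiber (S : Finset Γ) : Finset (Γ ⊕ (Γ × Bool)) :=
  S.disjSum (S ×ˢ Finset.univ)

def padCells (Q : Γ → Finset Γ) (u : Γ ⊕ (Γ × Bool)) : Finset (Γ ⊕ (Γ × Bool)) :=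
  padFiber (Q (Sum.elim id Prod.fst u))

theorem sum_padFiber (S : Finset Γ) (f : Γ ⊕ (Γ × Bool) → ℝ) :
    ∑ u ∈ padFiber S, f u = ∑ z ∈ S, (f (.inl z) + f (.inr (z, true)) + f (.inr (z, false))) := by
  simp only [padFiber, Finset.sum_disjSum, Finset.sum_product, Fintype.sum_bool,
    Finset.sum_add_distrib, add_assoc]

theorem isPartition_padCells [Fintype Γ] {Q : Γ → Finset Γ} (hQ : IsPartition Q) :
    IsPartition (padCells Q) := by
  refine ⟨?_, ?_⟩
  · rintro (y | ⟨y, t⟩) <;> simpa [padCells, padFiber] using hQ.1 y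
  · rintro u (z | ⟨z, t⟩) h <;> simp only [padCells, padFiber] at h ⊢ <;>
      simp only [Finset.inl_mem_disjSum, Finset.inr_mem_disjSum, Finset.mem_product,
        Finset.mem_univ, and_true] at h <;> simp [hQ.2 _ _ h]

variable [DecidableEq Γ]

/-- Each `z : Γ` carries mass `π z / (1 - c)` inside `padEvent A` and `π z / c` outside it, so
every `padFiber` has opinion `c`. -/
noncomputable def padWeight (c : ℝ) (π : Γ → ℝ) (A : Finset Γ) : Γ ⊕ (Γ × Bool) → ℝ :=
  Sum.elim π fun w => π w.1 *
    if w.2 then (if w.1 ∈ A then c / (1 - c) else 1 / (1 - c))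
    else (if w.1 ∈ A then 1 / c else (1 - c) / c)

variable {c : ℝ} {π : Γ → ℝ} {A : Finset Γ}

theorem padWeight_pos (hc₀ : 0 < c) (hc₁ : c < 1) (hπ : ∀ z, 0 < π z) (u : Γ ⊕ (Γ × Bool)) :
    0 < padWeight c π A u := by
  have : 0 < 1 - c := sub_pos.2 hc₁
  rcases u with z | ⟨z, t⟩
  · exact hπ z
  · exact mul_pos (hπ z) (by split_ifs <;> positivity)

variable [Fintype Γ]

def padEvent (A : Finset Γ) : Finset (Γ ⊕ (Γ × Bool)) :=
  A.disjSum (Finset.univ.filter fun w => w.2)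

theorem mass_padFiber_inter (hc₁ : c ≠ 1) (S : Finset Γ) :
    mass (padWeight c π A) (padFiber S ∩ padEvent A) = ∑ z ∈ S, π z / (1 - c) := by
  have : 1 - c ≠ 0 := sub_ne_zero.2 hc₁.symm
  rw [mass, ← Finset.filter_mem_eq_inter, Finset.sum_filter, sum_padFiber]
  refine Finset.sum_congr rfl fun z _ => ?_
  by_cases hz : z ∈ A
  · simp [padWeight, padEvent, hz]
    field_simp
    ring
  · simp [padWeight, padEvent, hz]
    field_simp

theorem mass_padFiber (hc₀ : c ≠ 0) (hc₁ : c ≠ 1) (S : Finset Γ) :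
    mass (padWeight c π A) (padFiber S) = (∑ z ∈ S, π z / (1 - c)) / c := by
  have : 1 - c ≠ 0 := sub_ne_zero.2 hc₁.symm
  rw [mass, sum_padFiber, Finset.sum_div]
  refine Finset.sum_congr rfl fun z _ => ?_
  by_cases hz : z ∈ A <;> simp [padWeight, hz] <;> field_simp <;> ring

theorem opin_padCells (hc₀ : 0 < c) (hc₁ : c < 1) (hπ : ∀ z, 0 < π z) {Q : Γ → Finset Γ}
    (hQ : IsPartition Q) (u : Γ ⊕ (Γ × Bool)) :
    opin (padWeight c π A) (padEvent A) (padCells Q) u = c := by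
  have hpos : 0 < ∑ z ∈ Q (Sum.elim id Prod.fst u), π z / (1 - c) :=
    Finset.sum_pos (fun z _ => div_pos (hπ z) (sub_pos.2 hc₁)) ⟨_, hQ.1 _⟩
  rw [opin, padCells, mass_padFiber_inter hc₁.ne, mass_padFiber hc₀.ne' hc₁.ne]
  field_simp

theorem refineBy_padCells (hc₀ : 0 < c) (hc₁ : c < 1) (hπ : ∀ z, 0 < π z)
    {P : Γ → Finset Γ} {r : ℝ} (hP : ∀ z, opin π A P z = r) (hr₀ : r ≠ 0) (hr₁ : r ≠ 1)
    (Q : Γ → Finset Γ) :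
    refineBy (padWeight c π A) (padEvent A) (sumCells P fun w => {w}) (padCells Q) =
      sumCells Q fun w => Q w.1 ×ˢ {w.2} := by
  have hinl (z : Γ) :
      opin (padWeight c π A) (padEvent A) (sumCells P fun w => {w}) (.inl z) = r :=
    (opin_sumCells_inl _ _ z).trans (hP z)
  have hinr (w : Γ × Bool) :
      opin (padWeight c π A) (padEvent A) (sumCells P fun w => {w}) (.inr w) =
        if w.2 then 1 else 0 := by
    rw [padWeight, padEvent, opin_sumCells_inr, opin_singleton]
    · simp
    · exact (padWeight_pos (A := A) hc₀ hc₁ hπ (.inr w)).ne'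
  funext u
  ext v
  rcases u with y | ⟨y, t⟩ <;> rcases v with z | ⟨z, t'⟩ <;>
    simp only [refineBy, Finset.mem_filter, hinl, hinr] <;>
    (try cases t) <;> (try cases t') <;>
    simp [padCells, padFiber, sumCells, hr₀, hr₁, hr₀.symm, hr₁.symm]

end Padding

def Realizable (s : ℕ → ℝ) : Prop :=
  ∃ (Ω : Type) (_ : Fintype Ω) (_ : DecidableEq Ω) (π : Ω → ℝ) (A : Finset Ω)
    (P Q : Ω → Finset Ω) (ω₀ : Ω), (∀ ω, 0 < π ω) ∧ IsPartition P ∧ IsPartition Q ∧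
    (∀ ω, opin π A P ω = s 0) ∧ ∀ n, dialogue π A P Q true ω₀ n = s n

theorem realizable_const {s : ℕ → ℝ} {r : ℝ} (h₀ : 0 ≤ r) (h₁ : r ≤ 1) (hs : ∀ n, s n = r) :
    Realizable s := by
  suffices ∃ (Ω : Type) (_ : Fintype Ω) (_ : DecidableEq Ω) (π : Ω → ℝ) (A : Finset Ω) (ω₀ : Ω),
      (∀ ω, 0 < π ω) ∧ ∀ ω, opin π A (fun _ => Finset.univ) ω = r by
    obtain ⟨Ω, _, _, π, A, ω₀, hπ, hr⟩ := this
    exact ⟨Ω, _, _, π, A, _, _, ω₀, hπ, isPartition_univ, isPartition_univ,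
      fun ω => by rw [hr, hs], fun n => by rw [dialogue_self isPartition_univ, hr, hs]⟩
  rcases h₀.eq_or_lt with rfl | h₀
  · exact ⟨Unit, inferInstance, inferInstance, fun _ => 1, ∅, (), fun _ => one_pos,
      fun _ => by simp [opin, mass]⟩
  rcases h₁.eq_or_lt with rfl | h₁
  · exact ⟨Unit, inferInstance, inferInstance, fun _ => 1, Finset.univ, (), fun _ => one_pos,
      fun _ => by simp [opin, mass]⟩
  refine ⟨Bool, inferInstance, inferInstance, fun t => if t then r else 1 - r, {true}, true,
    ?_, fun _ => ?_⟩
  · rintro (_ | _) <;> simp [h₀, h₁]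
  · simp [opin, mass]

theorem realizable_of_certain_tail {s : ℕ → ℝ} {d : ℝ} (h₀ : 0 < s 0) (h₁ : s 0 < 1)
    (hd : d = 0 ∨ d = 1) (hs : ∀ n, s (n + 1) = d) : Realizable s := by
  set a := decide (d = 1)
  set π : Bool → ℝ := fun t => if t = a then s 0 else 1 - s 0
  have hπ (t : Bool) : 0 < π t := by
    simp only [π]
    split_ifs <;> linarith
  have hP (t : Bool) : opin π {a} (fun _ => Finset.univ) t = s 0 := by
    cases ha : a <;> simp [opin, mass, π, ha]
  have hQ (t : Bool) : opin π {a} (fun t => {t}) t = if t = a then 1 else 0 := by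
    simp [opin_singleton _ (hπ t).ne']
  have hQd : (if true = a then (1 : ℝ) else 0) = d := by
    rcases hd with rfl | rfl <;> simp [a]
  have hrefine : refineBy π {a} (fun t => {t}) (fun _ => Finset.univ) = fun t => {t} := by
    funext t
    ext t'
    simp only [refineBy, Finset.mem_filter, Finset.mem_univ, true_and, hQ, Finset.mem_singleton]
    cases t <;> cases t' <;> cases a <;> simp
  refine ⟨Bool, inferInstance, inferInstance, π, {a}, fun _ => Finset.univ, fun t => {t}, true,
    hπ, isPartition_univ, isPartition_singleton, hP, ?_⟩
  rintro (_ | _ | n)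
  · rw [dialogue_zero, hP]
  · rw [dialogue_succ_of_opin_const _ hP, dialogue_zero, hQ, hQd, hs]
  · rw [dialogue_succ_of_opin_const _ hP, dialogue_succ, hrefine,
      dialogue_self isPartition_singleton, hQ, hQd, hs]

theorem Realizable.of_tail {s : ℕ → ℝ} (h₀ : 0 < s 0) (h₁ : s 0 < 1) (h₁₀ : s 1 ≠ 0)
    (h₁₁ : s 1 ≠ 1) (h : Realizable fun n => s (n + 1)) : Realizable s := by
  obtain ⟨Γ, _, _, π, A, P, Q, ω₀, hπ, hP, hQ, hPs, hdia⟩ := h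
  have hpad := opin_padCells (A := A) h₀ h₁ hπ hQ
  refine ⟨Γ ⊕ (Γ × Bool), _, _, padWeight (s 0) π A, padEvent A, padCells Q,
    sumCells P fun w => {w}, .inl ω₀, padWeight_pos h₀ h₁ hπ, isPartition_padCells hQ,
    isPartition_sumCells hP isPartition_singleton, hpad, ?_⟩
  rintro (_ | _ | n)
  · rw [dialogue_zero, hpad]
  · rw [dialogue_succ_of_opin_const _ hpad, dialogue_zero, padWeight, padEvent,
      opin_sumCells_inl, hPs]
  · rw [dialogue_succ_of_opin_const _ hpad, dialogue_succ,
      refineBy_padCells h₀ h₁ hπ hPs h₁₀ h₁₁, padWeight, padEvent, dialogue_sumCells_inl,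
      ← dialogue_succ_of_opin_const _ hPs]
    exact hdia (n + 1)

theorem Realizable.exists_isBOF {s : ℕ → ℝ} (h : Realizable s) :
    ∃ (Ω : Type) (_ : Fintype Ω) (_ : DecidableEq Ω) (π : Ω → ℝ) (A : Finset Ω)
      (P Q : Ω → Finset Ω) (ω₀ : Ω), IsBOF π P Q ∧ ∀ n, dialogue π A P Q true ω₀ n = s n := by
  obtain ⟨Ω, _, hΩ, π, A, P, Q, ω₀, hπ, hP, hQ, -, hdia⟩ := h
  have hmass : 0 < ∑ ω, π ω := Finset.sum_pos (fun ω _ => hπ ω) ⟨ω₀, Finset.mem_univ _⟩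
  refine ⟨Ω, _, hΩ, fun ω => (∑ ω, π ω)⁻¹ * π ω, A, P, Q, ω₀,
    ⟨fun ω => mul_pos (inv_pos.2 hmass) (hπ ω), ?_, hP, hQ⟩, fun n => ?_⟩
  · rw [← Finset.mul_sum, inv_mul_cancel₀ hmass.ne']
  · rw [dialogue_const_mul (inv_ne_zero hmass.ne'), hdia]

theorem eq_of_certain_of_le {T : ℕ} {b : ℕ → ℝ}
    (hca : ∀ t < T, (b t = 0 ∨ b t = 1) → b (t + 1) = b t) {k t : ℕ}
    (hk : b k = 0 ∨ b k = 1) (hkt : k ≤ t) (ht : t ≤ T) : b t = b k := by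
  induction t, hkt using Nat.le_induction with
  | base => rfl
  | succ t hkt ih =>
    have ih := ih (by omega)
    rw [hca t (by omega) (ih ▸ hk), ih]

theorem realizable_min_of_acquiescence (T : ℕ) (b : ℕ → ℝ)
    (hrange : ∀ t ≤ T, 0 ≤ b t ∧ b t ≤ 1)
    (hca : ∀ t < T, (b t = 0 ∨ b t = 1) → b (t + 1) = b t) :
    Realizable fun n => b (min n T) := by
  induction T generalizing b with
  | zero => exact realizable_const (hrange 0 le_rfl).1 (hrange 0 le_rfl).2 fun n => by simp
  | succ T ih =>
    by_cases hb₀ : b 0 = 0 ∨ b 0 = 1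
    · exact realizable_const (hrange 0 (by omega)).1 (hrange 0 (by omega)).2
        fun n => eq_of_certain_of_le hca hb₀ (Nat.zero_le _) (min_le_right _ _)
    obtain ⟨hb₀₀, hb₀₁⟩ := not_or.1 hb₀
    have h₀ : 0 < b 0 := (hrange 0 (by omega)).1.lt_of_ne' hb₀₀
    have h₁ : b 0 < 1 := (hrange 0 (by omega)).2.lt_of_ne hb₀₁
    by_cases hb₁ : b 1 = 0 ∨ b 1 = 1
    · exact realizable_of_certain_tail h₀ h₁ hb₁
        fun n => eq_of_certain_of_le hca hb₁ (by omega) (min_le_right _ _)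
    obtain ⟨hb₁₀, hb₁₁⟩ := not_or.1 hb₁
    refine Realizable.of_tail h₀ h₁ hb₁₀ hb₁₁ ?_
    simpa only [Nat.succ_min_succ] using ih (fun t => b (t + 1))
      (fun t ht => hrange (t + 1) (by omega)) (fun t ht => hca (t + 1) (by omega))

end RationalDialogues

/-- Any finite dialogue `(b₁, …, b_T)` with values in `[0,1]`
that does not violate certainty acquiescence is a rational dialogue: it is the
initial segment of a Bayesian dialogue at a fixed state (with first speaker `p`),
and moreover consensus is reached at time `T` at `b_T`.
Here `b t` (0-indexed, `t < T`) is the opinion `b_{t+1}`. -/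
theorem rational_dialogue_of_certainty_acquiescence
    (T : ℕ) (hT : 1 ≤ T) (b : ℕ → ℝ)
    (hrange : ∀ t, t < T → 0 ≤ b t ∧ b t ≤ 1)
    (hca : ∀ t, t + 1 < T → (b t = 0 ∨ b t = 1) → b (t + 1) = b t) :
    ∃ (Ω : Type) (_ : Fintype Ω) (_ : DecidableEq Ω) (π : Ω → ℝ) (A : Finset Ω)
      (P Q : Ω → Finset Ω) (ω₀ : Ω),
      IsBOF π P Q ∧
      (∀ t, t < T → dialogue π A P Q true ω₀ t = b t) ∧
      (∀ t, T - 1 ≤ t → dialogue π A P Q true ω₀ t = b (T - 1)) := by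
  obtain ⟨Ω, _, hΩ, π, A, P, Q, ω₀, hBOF, hdia⟩ :=
    (realizable_min_of_acquiescence (T - 1) b (fun t ht => hrange t (by omega))
      (fun t ht => hca t (by omega))).exists_isBOF
  refine ⟨Ω, _, hΩ, π, A, P, Q, ω₀, hBOF, fun t ht => ?_, fun t ht => ?_⟩ <;>
    rw [hdia] <;> congr 1 <;> omega
end

section
/- In any Bayesian dialogue at a fixed state ω*, generated by a Bayesian opinion framework on a finite state space, there is a finite time T by which consensus is reached: there exists T such that r_t = r_T for all t ≥ T, where (r₁, r₂, …) is the sequence of announced opinions. -/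
open RationalDialogues

namespace RDAux

variable {Ω : Type} [Fintype Ω] [DecidableEq Ω]

lemma mass_pos (π : Ω → ℝ) (hπ : ∀ ω, 0 < π ω) {s : Finset Ω} (hs : s.Nonempty) :
    0 < mass π s :=
  Finset.sum_pos (fun i _ => hπ i) hs

lemma opin_congr (π : Ω → ℝ) (A : Finset Ω) {C : Ω → Finset Ω} (hC : IsPartition C)
    {ω ω' : Ω} (h : ω' ∈ C ω) : opin π A C ω' = opin π A C ω := by
  simp [opin, hC.2 ω ω' h]

lemma refineBy_isPartition (π : Ω → ℝ) (A : Finset Ω) (C D : Ω → Finset Ω)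
    (hD : IsPartition D) : IsPartition (refineBy π A C D) := by
  refine ⟨fun ω => by simp [refineBy, hD.1 ω], fun ω ω' h => ?_⟩
  simp only [refineBy, Finset.mem_filter] at h
  simp [refineBy, hD.2 ω ω' h.1, h.2]

lemma partsAt_succ_pos (π : Ω → ℝ) (A : Finset Ω) (P Q : Ω → Finset Ω)
    (pFirst : Bool) {n : ℕ} (hps : pSpeaksAt pFirst n) :
    partsAt π A P Q pFirst (n + 1) =
      ((partsAt π A P Q pFirst n).1,
        refineBy π A (partsAt π A P Q pFirst n).1 (partsAt π A P Q pFirst n).2) := by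
  simp [partsAt, hps]

lemma partsAt_succ_neg (π : Ω → ℝ) (A : Finset Ω) (P Q : Ω → Finset Ω)
    (pFirst : Bool) {n : ℕ} (hps : ¬ pSpeaksAt pFirst n) :
    partsAt π A P Q pFirst (n + 1) =
      (refineBy π A (partsAt π A P Q pFirst n).2 (partsAt π A P Q pFirst n).1,
        (partsAt π A P Q pFirst n).2) := by
  simp [partsAt, hps]

lemma partsAt_isPartition (π : Ω → ℝ) (A : Finset Ω) (P Q : Ω → Finset Ω)
    (pFirst : Bool) (hP : IsPartition P) (hQ : IsPartition Q) (n : ℕ) :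
    IsPartition (partsAt π A P Q pFirst n).1 ∧ IsPartition (partsAt π A P Q pFirst n).2 := by
  induction n with
  | zero => exact ⟨hP, hQ⟩
  | succ n ih =>
    by_cases hps : pSpeaksAt pFirst n
    · rw [partsAt_succ_pos π A P Q pFirst hps]
      exact ⟨ih.1, refineBy_isPartition _ _ _ _ ih.2⟩
    · rw [partsAt_succ_neg π A P Q pFirst hps]
      exact ⟨refineBy_isPartition _ _ _ _ ih.1, ih.2⟩

end RDAux

namespace RDAux
set_option linter.unusedSectionVars false
variable {Ω : Type} [Fintype Ω] [DecidableEq Ω]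

lemma ev_const : ∀ (k : ℕ) (f : ℕ → ℕ), (∀ n m, n ≤ m → f m ≤ f n) → f 0 ≤ k →
    ∃ N, ∀ n, N ≤ n → f n = f N := by
  intro k
  induction k with
  | zero =>
    intro f hf h0
    refine ⟨0, fun n _ => ?_⟩
    have h1 := hf 0 n (Nat.zero_le n)
    omega
  | succ k ih =>
    intro f hf h0
    by_cases h : ∃ m, f m < f 0
    · obtain ⟨m, hm⟩ := h
      obtain ⟨N, hN⟩ := ih (fun n => f (m + n))
        (fun n n' hn => hf (m + n) (m + n') (by omega)) (by simpa using by omega)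
      refine ⟨m + N, fun n hn => ?_⟩
      have : f n = f (m + (n - m)) := by congr 1; omega
      rw [this, hN (n - m) (by omega)]
    · push_neg at h
      exact ⟨0, fun n _ => le_antisymm (hf 0 n (Nat.zero_le n)) (h n)⟩

variable (π : Ω → ℝ) (A : Finset Ω) (P Q : Ω → Finset Ω) (pFirst : Bool)

/-- total size of the pair of partitions at time `n` -/
noncomputable def sz (n : ℕ) : ℕ :=
  (∑ ω, ((partsAt π A P Q pFirst n).1 ω).card) +
  (∑ ω, ((partsAt π A P Q pFirst n).2 ω).card)

lemma refineBy_subset (C D : Ω → Finset Ω) (ω : Ω) : refineBy π A C D ω ⊆ D ω :=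
  Finset.filter_subset _ _

lemma sz_succ_le (n : ℕ) : sz π A P Q pFirst (n + 1) ≤ sz π A P Q pFirst n := by
  by_cases hps : pSpeaksAt pFirst n
  · rw [sz, partsAt_succ_pos π A P Q pFirst hps]
    exact Nat.add_le_add le_rfl (Finset.sum_le_sum fun ω _ =>
      Finset.card_le_card (refineBy_subset π A _ _ ω))
  · rw [sz, partsAt_succ_neg π A P Q pFirst hps]
    exact Nat.add_le_add (Finset.sum_le_sum fun ω _ =>
      Finset.card_le_card (refineBy_subset π A _ _ ω)) le_rfl

lemma sz_antitone {n m : ℕ} (h : n ≤ m) : sz π A P Q pFirst m ≤ sz π A P Q pFirst n := by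
  induction m with
  | zero =>
    have hn0 : n = 0 := by omega
    simp [hn0]
  | succ m ih =>
    rcases Nat.lt_or_ge n (m + 1) with h' | h'
    · exact le_trans (sz_succ_le π A P Q pFirst m) (ih (by omega))
    · have : n = m + 1 := le_antisymm h h'
      simp [this]

/-- if the size doesn't drop at a step, the partitions don't change -/
lemma parts_eq_of_sz_eq {n : ℕ} (h : sz π A P Q pFirst (n + 1) = sz π A P Q pFirst n) :
    partsAt π A P Q pFirst (n + 1) = partsAt π A P Q pFirst n := by
  by_cases hps : pSpeaksAt pFirst n
  · rw [partsAt_succ_pos π A P Q pFirst hps]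
    rw [sz, partsAt_succ_pos π A P Q pFirst hps, sz] at h
    have hsum : ∑ ω, ((refineBy π A (partsAt π A P Q pFirst n).1
        (partsAt π A P Q pFirst n).2) ω).card = ∑ ω, (((partsAt π A P Q pFirst n).2) ω).card := by
      dsimp only at h; omega
    have := (Finset.sum_eq_sum_iff_of_le (s := (Finset.univ : Finset Ω))
      (f := fun ω => ((refineBy π A (partsAt π A P Q pFirst n).1
        (partsAt π A P Q pFirst n).2) ω).card)
      (g := fun ω => (((partsAt π A P Q pFirst n).2) ω).card)
      (fun ω _ => Finset.card_le_card (refineBy_subset π A _ _ ω))).mp hsum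
    have heq : refineBy π A (partsAt π A P Q pFirst n).1 (partsAt π A P Q pFirst n).2
        = (partsAt π A P Q pFirst n).2 := by
      funext ω
      exact Finset.eq_of_subset_of_card_le (refineBy_subset π A _ _ ω)
        (le_of_eq (this ω (Finset.mem_univ ω)).symm)
    rw [heq]
  · rw [partsAt_succ_neg π A P Q pFirst hps]
    rw [sz, partsAt_succ_neg π A P Q pFirst hps, sz] at h
    have hsum : ∑ ω, ((refineBy π A (partsAt π A P Q pFirst n).2
        (partsAt π A P Q pFirst n).1) ω).card = ∑ ω, (((partsAt π A P Q pFirst n).1) ω).card := by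
      dsimp only at h; omega
    have := (Finset.sum_eq_sum_iff_of_le (s := (Finset.univ : Finset Ω))
      (f := fun ω => ((refineBy π A (partsAt π A P Q pFirst n).2
        (partsAt π A P Q pFirst n).1) ω).card)
      (g := fun ω => (((partsAt π A P Q pFirst n).1) ω).card)
      (fun ω _ => Finset.card_le_card (refineBy_subset π A _ _ ω))).mp hsum
    have heq : refineBy π A (partsAt π A P Q pFirst n).2 (partsAt π A P Q pFirst n).1
        = (partsAt π A P Q pFirst n).1 := by
      funext ω
      exact Finset.eq_of_subset_of_card_le (refineBy_subset π A _ _ ω)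
        (le_of_eq (this ω (Finset.mem_univ ω)).symm)
    rw [heq]

lemma parts_stabilize : ∃ N, ∀ n, N ≤ n →
    partsAt π A P Q pFirst n = partsAt π A P Q pFirst N := by
  obtain ⟨N, hN⟩ := ev_const (sz π A P Q pFirst 0) (sz π A P Q pFirst)
    (fun n m h => sz_antitone π A P Q pFirst h) le_rfl
  refine ⟨N, fun n hn => ?_⟩
  induction n with
  | zero => simp_all
  | succ n ih =>
    rcases Nat.lt_or_ge N (n + 1) with h' | h'
    · have hn' : N ≤ n := by omega
      rw [parts_eq_of_sz_eq π A P Q pFirst (by rw [hN (n+1) hn, hN n hn']), ih hn']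
    · have : N = n + 1 := le_antisymm hn h'
      simp [this]

end RDAux

namespace RDAux
set_option linter.unusedSectionVars false
variable {Ω : Type} [Fintype Ω] [DecidableEq Ω]

lemma mass_cell_inter (π : Ω → ℝ) (A : Finset Ω) (C : Ω → Finset Ω)
    (hπ : ∀ ω, 0 < π ω) (hC : IsPartition C) (ω : Ω) :
    mass π (C ω ∩ A) = opin π A C ω * mass π (C ω) := by
  have hpos : 0 < mass π (C ω) := mass_pos π hπ ⟨ω, hC.1 ω⟩
  rw [opin, div_mul_cancel₀ _ (ne_of_gt hpos)]

/-- key averaging lemma: if `E` is saturated for the partition `C` and the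
opinion of `C` equals `r` everywhere on `E`, then the conditional probability
of `A` given `E` is `r`. -/
lemma mass_inter_eq (π : Ω → ℝ) (A : Finset Ω) (C : Ω → Finset Ω)
    (hπ : ∀ ω, 0 < π ω) (hC : IsPartition C) (E : Finset Ω) (r : ℝ)
    (hsat : ∀ ω ∈ E, C ω ⊆ E) (hval : ∀ ω ∈ E, opin π A C ω = r) :
    mass π (E ∩ A) = r * mass π E := by
  classical
  have fib : ∀ c ∈ E.image C, E.filter (fun ω => C ω = c) = c := by
    intro c hc
    obtain ⟨ω₁, hω₁, rfl⟩ := Finset.mem_image.mp hc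
    ext ω
    simp only [Finset.mem_filter]
    constructor
    · rintro ⟨hωE, hωc⟩; exact hωc ▸ hC.1 ω
    · intro hω
      exact ⟨hsat ω₁ hω₁ hω, hC.2 ω₁ ω hω⟩
  have key : ∀ (u : Ω → ℝ), (∀ ω₁ ∈ E, ∑ ω ∈ C ω₁, u ω = 0) → ∑ ω ∈ E, u ω = 0 := by
    intro u hu
    rw [← Finset.sum_fiberwise_of_maps_to (g := C) (t := E.image C)
      (fun ω hω => Finset.mem_image_of_mem C hω) u]
    refine Finset.sum_eq_zero fun c hc => ?_
    obtain ⟨ω₁, hω₁, rfl⟩ := Finset.mem_image.mp hc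
    rw [fib _ hc]
    exact hu ω₁ hω₁
  have h0 : ∑ ω ∈ E, ((if ω ∈ A then π ω else 0) - r * π ω) = 0 := by
    refine key _ fun ω₁ hω₁ => ?_
    rw [Finset.sum_sub_distrib, Finset.sum_ite_mem, ← Finset.mul_sum]
    have := mass_cell_inter π A C hπ hC ω₁
    rw [hval ω₁ hω₁] at this
    simp only [mass] at this
    linarith
  rw [Finset.sum_sub_distrib, Finset.sum_ite_mem, ← Finset.mul_sum, sub_eq_zero] at h0
  simpa [mass] using h0

/-- the agreement theorem at a stable pair of partitions -/
lemma agree (π : Ω → ℝ) (A : Finset Ω) (P Q : Ω → Finset Ω)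
    (hπ : ∀ ω, 0 < π ω) (hP : IsPartition P) (hQ : IsPartition Q)
    (hPQ : refineBy π A Q P = P) (hQP : refineBy π A P Q = Q) (ω₀ : Ω) :
    opin π A P ω₀ = opin π A Q ω₀ := by
  classical
  set f := opin π A P with hf
  set g := opin π A Q with hg
  have hfQ : ∀ ω ω', ω' ∈ Q ω → f ω' = f ω := by
    intro ω ω' h'
    rw [← hQP] at h'
    exact (Finset.mem_filter.mp h').2
  have hgP : ∀ ω ω', ω' ∈ P ω → g ω' = g ω := by
    intro ω ω' h'
    rw [← hPQ] at h'
    exact (Finset.mem_filter.mp h').2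
  have hfP : ∀ ω ω', ω' ∈ P ω → f ω' = f ω := fun ω ω' h' => opin_congr π A hP h'
  have hgQ : ∀ ω ω', ω' ∈ Q ω → g ω' = g ω := fun ω ω' h' => opin_congr π A hQ h'
  set E : Finset Ω := Finset.univ.filter (fun ω => f ω = f ω₀ ∧ g ω = g ω₀) with hE
  have hω₀E : ω₀ ∈ E := by simp [hE]
  have hsatP : ∀ ω ∈ E, P ω ⊆ E := by
    intro ω hω ω' hω'
    simp only [hE, Finset.mem_filter, Finset.mem_univ, true_and] at hω ⊢
    exact ⟨(hfP ω ω' hω').trans hω.1, (hgP ω ω' hω').trans hω.2⟩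
  have hsatQ : ∀ ω ∈ E, Q ω ⊆ E := by
    intro ω hω ω' hω'
    simp only [hE, Finset.mem_filter, Finset.mem_univ, true_and] at hω ⊢
    exact ⟨(hfQ ω ω' hω').trans hω.1, (hgQ ω ω' hω').trans hω.2⟩
  have h1 : mass π (E ∩ A) = f ω₀ * mass π E :=
    mass_inter_eq π A P hπ hP E (f ω₀) hsatP
      (fun ω hω => by simp only [hE, Finset.mem_filter] at hω; exact hω.2.1)
  have h2 : mass π (E ∩ A) = g ω₀ * mass π E :=
    mass_inter_eq π A Q hπ hQ E (g ω₀) hsatQ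
      (fun ω hω => by simp only [hE, Finset.mem_filter] at hω; exact hω.2.2)
  have hEpos : 0 < mass π E := mass_pos π hπ ⟨ω₀, hω₀E⟩
  exact mul_right_cancel₀ (ne_of_gt hEpos) (h1.symm.trans h2)

end RDAux

namespace RDAux
set_option linter.unusedSectionVars false
variable {Ω : Type} [Fintype Ω] [DecidableEq Ω]

lemma pSpeaksAt_flip (pFirst : Bool) (n : ℕ) :
    pSpeaksAt pFirst (n + 1) ↔ ¬ pSpeaksAt pFirst n := by
  cases pFirst <;> simp [pSpeaksAt, Nat.even_add_one]

end RDAux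


open RDAux in
/-- In any Bayesian dialogue at a fixed state on a finite
state space, there is a finite time `T` by which consensus is reached:
`r_t = r_T` for all `t ≥ T`. -/
theorem bayesian_dialogue_reaches_consensus
    {Ω : Type} [Fintype Ω] [DecidableEq Ω] (π : Ω → ℝ) (A : Finset Ω)
    (P Q : Ω → Finset Ω) (pFirst : Bool) (ω₀ : Ω) (h : IsBOF π P Q) :
    ∃ T : ℕ, ∀ t, T ≤ t →
      dialogue π A P Q pFirst ω₀ t = dialogue π A P Q pFirst ω₀ T := by

  obtain ⟨hπ, -, hP, hQ⟩ := h
  obtain ⟨N, hN⟩ := parts_stabilize π A P Q pFirst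
  set Ps := (partsAt π A P Q pFirst N).1 with hPs
  set Qs := (partsAt π A P Q pFirst N).2 with hQs
  have hpart := partsAt_isPartition π A P Q pFirst hP hQ N
  have step1 : partsAt π A P Q pFirst (N + 1) = partsAt π A P Q pFirst N := hN (N+1) (by omega)
  have step2 : partsAt π A P Q pFirst (N + 2) = partsAt π A P Q pFirst N := hN (N+2) (by omega)
  have key : refineBy π A Ps Qs = Qs ∧ refineBy π A Qs Ps = Ps := by
    by_cases hps : pSpeaksAt pFirst N
    · have e1 := (partsAt_succ_pos π A P Q pFirst hps).symm.trans step1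
      have hps2 : ¬ pSpeaksAt pFirst (N + 1) := by
        rw [pSpeaksAt_flip]; exact not_not_intro hps
      have e2 := (partsAt_succ_neg π A P Q pFirst hps2).symm.trans step2
      rw [step1] at e2
      exact ⟨congrArg Prod.snd e1, congrArg Prod.fst e2⟩
    · have e1 := (partsAt_succ_neg π A P Q pFirst hps).symm.trans step1
      have hps2 : pSpeaksAt pFirst (N + 1) := by rw [pSpeaksAt_flip]; exact hps
      have e2 := (partsAt_succ_pos π A P Q pFirst hps2).symm.trans step2
      rw [step1] at e2
      exact ⟨congrArg Prod.snd e2, congrArg Prod.fst e1⟩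
  have hagree : opin π A Ps ω₀ = opin π A Qs ω₀ :=
    agree π A Ps Qs hπ hpart.1 hpart.2 key.2 key.1 ω₀
  have hval : ∀ t, N ≤ t → dialogue π A P Q pFirst ω₀ t = opin π A Ps ω₀ := by
    intro t ht
    rw [dialogue, hN t ht]
    split
    · rfl
    · exact hagree.symm
  exact ⟨N, fun t ht => by rw [hval t ht, hval N le_rfl]⟩
end

section
/- Every rational dialogue satisfies certainty acquiescence: if the finite sequence (b₁, …, b_T) is the initial segment of a Bayesian dialogue at a fixed state and b_t ∈ {0, 1} for some t < T, then b_{t+1} = b_t. -/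
open RationalDialogues

section Aux
variable {Ω : Type} [Fintype Ω] [DecidableEq Ω]

lemma mass_pos {π : Ω → ℝ} (hπ : ∀ ω, 0 < π ω) {s : Finset Ω} (hs : s.Nonempty) :
    0 < mass π s :=
  Finset.sum_pos (fun x _ => hπ x) hs

lemma eq_empty_of_mass_eq_zero {π : Ω → ℝ} (hπ : ∀ ω, 0 < π ω) {s : Finset Ω}
    (h : mass π s = 0) : s = ∅ := by
  by_contra hne
  exact absurd h (mass_pos hπ (Finset.nonempty_iff_ne_empty.mpr hne)).ne'

lemma key_lemma (π : Ω → ℝ) (A : Finset Ω) (C D : Ω → Finset Ω)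
    (hπ : ∀ ω, 0 < π ω) (hC : ∀ ω, ω ∈ C ω) (hD : ∀ ω, ω ∈ D ω) (ω₀ : Ω)
    (h : opin π A C ω₀ = 0 ∨ opin π A C ω₀ = 1) :
    opin π A (refineBy π A C D) ω₀ = opin π A C ω₀ := by
  classical
  set E := refineBy π A C D ω₀ with hE
  have hmemE : ω₀ ∈ E := Finset.mem_filter.mpr ⟨hD ω₀, rfl⟩
  have hEpos : 0 < mass π E := mass_pos hπ ⟨ω₀, hmemE⟩
  rcases h with h | h
  · have hA : E ∩ A = ∅ := by
      rw [Finset.eq_empty_iff_forall_notMem]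
      intro x hx
      rcases Finset.mem_inter.mp hx with ⟨hxE, hxA⟩
      have hop : opin π A C x = 0 := by
        have h2 := (Finset.mem_filter.mp hxE).2
        rw [h2, h]
      have hden : mass π (C x) ≠ 0 := (mass_pos hπ ⟨x, hC x⟩).ne'
      have hnum : mass π (C x ∩ A) = 0 := by
        rcases div_eq_zero_iff.mp hop with h3 | h3
        · exact h3
        · exact absurd h3 hden
      have : C x ∩ A = ∅ := eq_empty_of_mass_eq_zero hπ hnum
      have : x ∈ C x ∩ A := Finset.mem_inter.mpr ⟨hC x, hxA⟩
      simp_all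
    rw [h]
    show mass π (E ∩ A) / mass π E = 0
    rw [hA]
    simp [mass]
  · have hsub : E ∩ A = E := by
      apply Finset.inter_eq_left.mpr
      intro x hxE
      have hop : opin π A C x = 1 := by
        have h2 := (Finset.mem_filter.mp hxE).2
        rw [h2, h]
      have hden : mass π (C x) ≠ 0 := (mass_pos hπ ⟨x, hC x⟩).ne'
      have hnum : mass π (C x ∩ A) = mass π (C x) :=
        (div_eq_one_iff_eq hden).mp hop
      have hdiff : mass π (C x \ A) = 0 := by
        have hsplit : mass π (C x ∩ A) + mass π (C x \ A) = mass π (C x) :=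
          Finset.sum_inter_add_sum_sdiff _ _ _
        linarith
      have hempty : C x \ A = ∅ := eq_empty_of_mass_eq_zero hπ hdiff
      by_contra hxA
      have hmem : x ∈ C x \ A := Finset.mem_sdiff.mpr ⟨hC x, hxA⟩
      rw [hempty] at hmem
      exact absurd hmem (Finset.notMem_empty x)
    rw [h]
    show mass π (E ∩ A) / mass π E = 1
    rw [hsub]
    exact div_self hEpos.ne'

lemma partsAt_mem (π : Ω → ℝ) (A : Finset Ω) (P Q : Ω → Finset Ω) (pFirst : Bool)
    (hP : ∀ ω, ω ∈ P ω) (hQ : ∀ ω, ω ∈ Q ω) (n : ℕ) :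
    (∀ ω, ω ∈ (partsAt π A P Q pFirst n).1 ω) ∧
    (∀ ω, ω ∈ (partsAt π A P Q pFirst n).2 ω) := by
  induction n with
  | zero => exact ⟨hP, hQ⟩
  | succ n ih =>
    classical
    rcases ih with ⟨ih1, ih2⟩
    rw [partsAt]
    split
    · exact ⟨ih1, fun ω => Finset.mem_filter.mpr ⟨ih2 ω, rfl⟩⟩
    · exact ⟨fun ω => Finset.mem_filter.mpr ⟨ih1 ω, rfl⟩, ih2⟩

lemma pSpeaksAt_succ (pFirst : Bool) (n : ℕ) :
    pSpeaksAt pFirst (n + 1) ↔ ¬ pSpeaksAt pFirst n := by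
  cases pFirst <;> simp [pSpeaksAt, Nat.even_add_one]

end Aux


/-- Every rational dialogue satisfies certainty acquiescence:
if `(b₁, …, b_T)` is the initial segment of a Bayesian dialogue at a fixed
state and `b_t ∈ {0,1}` for some `t < T`, then `b_{t+1} = b_t`.
(0-indexed: `b t` for `t < T`.) -/

theorem rational_dialogue_certainty_acquiescence
    {Ω : Type} [Fintype Ω] [DecidableEq Ω] (π : Ω → ℝ) (A : Finset Ω)
    (P Q : Ω → Finset Ω) (pFirst : Bool) (ω₀ : Ω) (h : IsBOF π P Q)
    (T : ℕ) (b : ℕ → ℝ)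
    (hb : ∀ t, t < T → b t = dialogue π A P Q pFirst ω₀ t)
    (t : ℕ) (ht : t + 1 < T) (hcert : b t = 0 ∨ b t = 1) :
    b (t + 1) = b t := by
  classical
  obtain ⟨hπ, -, hP, hQ⟩ := h
  obtain ⟨hm1, hm2⟩ := partsAt_mem π A P Q pFirst hP.1 hQ.1 t
  rw [hb t (by omega)] at hcert ⊢
  rw [hb (t+1) ht]
  simp only [dialogue] at hcert ⊢
  by_cases hs : pSpeaksAt pFirst t
  · have hs' : ¬ pSpeaksAt pFirst (t+1) := by
      rw [pSpeaksAt_succ]; exact not_not_intro hs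
    rw [if_pos hs] at hcert ⊢
    rw [if_neg hs']
    have hstep : partsAt π A P Q pFirst (t+1) =
        ((partsAt π A P Q pFirst t).1,
          refineBy π A (partsAt π A P Q pFirst t).1 (partsAt π A P Q pFirst t).2) := by
      rw [partsAt]; simp [hs]
    rw [hstep]
    exact key_lemma π A _ _ hπ hm1 hm2 ω₀ hcert
  · have hs' : pSpeaksAt pFirst (t+1) := (pSpeaksAt_succ pFirst t).mpr hs
    rw [if_neg hs] at hcert ⊢
    rw [if_pos hs']
    have hstep : partsAt π A P Q pFirst (t+1) =
        (refineBy π A (partsAt π A P Q pFirst t).2 (partsAt π A P Q pFirst t).1,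
          (partsAt π A P Q pFirst t).2) := by
      rw [partsAt]; simp [hs]
    rw [hstep]
    exact key_lemma π A _ _ hπ hm2 hm1 ω₀ hcert
end

section
/- If an event E ⊆ Ω is common knowledge at ω* (i.e., ω* ∈ E and P(ω) ∪ Q(ω) ⊆ E for all ω ∈ E), then the Bayesian dialogue at the fixed state ω* does not depend on the framework outside E: if two Bayesian opinion frameworks (Ω, π, A, P, Q) and (Ω, π', A', P', Q') satisfy π(ω) = π'(ω), P(ω) = P'(ω), Q(ω) = Q'(ω) for all ω ∈ E and A ∩ E = A' ∩ E, and E is common knowledge at ω* in both, then the two Bayesian dialogues at the fixed state ω* (with the same first speaker) produce identical opinion sequences (r₁, r₂, …). -/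
open RationalDialogues

namespace RationalDialogues

/-- The event `E` is common knowledge at `ω₀`:
`ω₀ ∈ E` and `P(ω) ∪ Q(ω) ⊆ E` for all `ω ∈ E`. -/
def CommonKnowledgeAt {Ω : Type} [Fintype Ω] [DecidableEq Ω]
    (P Q : Ω → Finset Ω) (E : Finset Ω) (ω₀ : Ω) : Prop :=
  ω₀ ∈ E ∧ ∀ ω ∈ E, P ω ∪ Q ω ⊆ E

end RationalDialogues

/-- If `E` is common knowledge at `ω₀`, the Bayesian dialogue
at the fixed state `ω₀` does not depend on the framework outside `E`: two
frameworks agreeing on `E` (in prior, partitions, and event) in both of which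
`E` is common knowledge at `ω₀` produce identical opinion sequences, for the
same first speaker. -/
theorem dialogue_depends_only_on_common_knowledge_event
    {Ω : Type} [Fintype Ω] [DecidableEq Ω]
    (π π' : Ω → ℝ) (A A' : Finset Ω) (P Q P' Q' : Ω → Finset Ω)
    (E : Finset Ω) (ω₀ : Ω) (pFirst : Bool)
    (h : IsBOF π P Q) (h' : IsBOF π' P' Q')
    (hπ : ∀ ω ∈ E, π ω = π' ω)
    (hP : ∀ ω ∈ E, P ω = P' ω)
    (hQ : ∀ ω ∈ E, Q ω = Q' ω)
    (hA : A ∩ E = A' ∩ E)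
    (hck : CommonKnowledgeAt P Q E ω₀)
    (hck' : CommonKnowledgeAt P' Q' E ω₀) :
    ∀ n, dialogue π A P Q pFirst ω₀ n = dialogue π' A' P' Q' pFirst ω₀ n := by
  obtain ⟨hE0, hckPQ⟩ := hck
  have hAE : ∀ ω ∈ E, (ω ∈ A ↔ ω ∈ A') := by
    intro ω hω
    constructor <;> intro hx
    · have : ω ∈ A' ∩ E := hA ▸ Finset.mem_inter.mpr ⟨hx, hω⟩
      exact (Finset.mem_inter.mp this).1
    · have : ω ∈ A ∩ E := hA.symm ▸ Finset.mem_inter.mpr ⟨hx, hω⟩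
      exact (Finset.mem_inter.mp this).1
  have hmass : ∀ s : Finset Ω, s ⊆ E → mass π s = mass π' s := fun s hs =>
    Finset.sum_congr rfl fun ω hω => hπ ω (hs hω)
  have hinter : ∀ s : Finset Ω, s ⊆ E → s ∩ A = s ∩ A' := by
    intro s hs
    ext ω
    simp only [Finset.mem_inter]
    exact and_congr_right fun hω => hAE ω (hs hω)
  have hopin : ∀ (C C' : Ω → Finset Ω) (ω : Ω), C ω = C' ω → C ω ⊆ E →
      opin π A C ω = opin π' A' C' ω := by
    intro C C' ω hC hsub
    rw [opin, opin, ← hC, hinter (C ω) hsub,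
      hmass _ (Finset.inter_subset_left.trans hsub), hmass _ hsub]
  have hrefine : ∀ (C C' D D' : Ω → Finset Ω),
      (∀ ω ∈ E, C ω = C' ω ∧ C ω ⊆ E) → (∀ ω ∈ E, D ω = D' ω ∧ D ω ⊆ E) →
      ∀ ω ∈ E, refineBy π A C D ω = refineBy π' A' C' D' ω ∧
        refineBy π A C D ω ⊆ E := by
    intro C C' D D' hCC hDD ω hω
    have hDsub : D ω ⊆ E := (hDD ω hω).2
    have hsub : refineBy π A C D ω ⊆ E := fun x hx =>
      hDsub (Finset.mem_of_mem_filter x hx)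
    refine ⟨?_, hsub⟩
    rw [refineBy, refineBy, ← (hDD ω hω).1]
    apply Finset.filter_congr
    intro x hx
    have hxE : x ∈ E := hDsub hx
    rw [hopin C C' x (hCC x hxE).1 (hCC x hxE).2,
      hopin C C' ω (hCC ω hω).1 (hCC ω hω).2]
  have key : ∀ n,
      (∀ ω ∈ E, (partsAt π A P Q pFirst n).1 ω = (partsAt π' A' P' Q' pFirst n).1 ω ∧
        (partsAt π A P Q pFirst n).1 ω ⊆ E) ∧
      (∀ ω ∈ E, (partsAt π A P Q pFirst n).2 ω = (partsAt π' A' P' Q' pFirst n).2 ω ∧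
        (partsAt π A P Q pFirst n).2 ω ⊆ E) := by
    intro n
    induction n with
    | zero =>
      refine ⟨fun ω hω => ⟨hP ω hω, ?_⟩, fun ω hω => ⟨hQ ω hω, ?_⟩⟩
      · exact (Finset.union_subset_iff.mp (hckPQ ω hω)).1
      · exact (Finset.union_subset_iff.mp (hckPQ ω hω)).2
    | succ n ih =>
      obtain ⟨ih1, ih2⟩ := ih
      by_cases hsp : pSpeaksAt pFirst n
      · simp only [partsAt, if_pos hsp]
        exact ⟨ih1, hrefine _ _ _ _ ih1 ih2⟩
      · simp only [partsAt, if_neg hsp]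
        exact ⟨hrefine _ _ _ _ ih2 ih1, ih2⟩
  intro n
  obtain ⟨k1, k2⟩ := key n
  unfold dialogue
  by_cases hsp : pSpeaksAt pFirst n
  · rw [if_pos hsp, if_pos hsp]
    exact hopin _ _ ω₀ (k1 ω₀ hE0).1 (k1 ω₀ hE0).2
  · rw [if_neg hsp, if_neg hsp]
    exact hopin _ _ ω₀ (k2 ω₀ hE0).1 (k2 ω₀ hE0).2
end

section
/- For every positive integer n and all real numbers c, d with 0 < c < 1, 0 < d < 1, and c ≠ d, there exists a Bayesian opinion framework and a fixed state ω* whose Bayesian dialogue has opinion sequence (c, d, c, d, …, c, d, c, c, c, …): the two agents alternate between c and d for n full alternations, and then consensus is suddenly reached at c for all subsequent times. -/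
open RationalDialogues

namespace RDaux

def pbase (i : ℕ) : ℕ := 2*((i+1)/2) - 1
def qbase (i : ℕ) : ℕ := 2*(i/2)

def pid (n t i : ℕ) : ℕ :=
  if i = 0 then 0
  else if i ≤ 2*n then (if pbase i + 1 ≤ t then i else pbase i)
  else 2*n+1

def qid (n t i : ℕ) : ℕ :=
  if i ≤ 2*n-1 then (if qbase i + 1 ≤ t then i else qbase i)
  else if 2*n+1 ≤ t then (if i = 2*n then 2*n else 2*n+1)
  else 2*n

def pcode (n t i : ℕ) : ℕ :=
  if i = 0 ∨ (i ≤ 2*n ∧ pbase i + 1 ≤ t) then i % 2 else 2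

def qcode (n t i : ℕ) : ℕ :=
  if (i ≤ 2*n-1 ∧ qbase i + 1 ≤ t) ∨ (i = 2*n ∧ 2*n+1 ≤ t) then i % 2
  else if i ≤ 2*n-1 then 3
  else if 2*n+1 ≤ t then 2 else 3

lemma pcode_le (n t i : ℕ) : pcode n t i ≤ 3 := by
  unfold pcode; split_ifs <;> omega

lemma qcode_le (n t i : ℕ) : qcode n t i ≤ 3 := by
  unfold qcode; split_ifs <;> omega

lemma pid_even_stable {n t : ℕ} (ht : t % 2 = 0) (i : ℕ) :
    pid n (t+1) i = pid n t i := by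
  unfold pid pbase; split_ifs <;> omega

lemma qid_odd_stable {n t : ℕ} (ht : t % 2 = 1) (i : ℕ) :
    qid n (t+1) i = qid n t i := by
  unfold qid qbase; split_ifs <;> omega

set_option maxHeartbeats 4000000 in
lemma evenStep {n t : ℕ} (hn : 0 < n) (ht : t % 2 = 0) {i j : ℕ}
    (hi : i < 2*n+3) (hj : j < 2*n+3) :
    qid n (t+1) j = qid n (t+1) i ↔ (qid n t j = qid n t i ∧ pcode n t j = pcode n t i) := by
  unfold qid qbase pcode pbase; split_ifs <;> omega

set_option maxHeartbeats 4000000 in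
lemma oddStep {n t : ℕ} (hn : 0 < n) (ht : t % 2 = 1) {i j : ℕ}
    (hi : i < 2*n+3) (hj : j < 2*n+3) :
    pid n (t+1) j = pid n (t+1) i ↔ (pid n t j = pid n t i ∧ qcode n t j = qcode n t i) := by
  unfold pid pbase qcode qbase; split_ifs <;> first | omega | simp

end RDaux

namespace RDaux

open RationalDialogues

def InA (n i : ℕ) : Prop := (i % 2 = 1 ∧ i < 2*n) ∨ i = 2*n+2

instance (n i : ℕ) : Decidable (InA n i) := by unfold InA; infer_instance

noncomputable def wch (c d : ℝ) : ℕ → ℝ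
  | 0 => 1
  | i+1 => wch c d i * (if i % 2 = 0 then d/(1-d) else (1-c)/c)

noncomputable def wS (n : ℕ) (c d : ℝ) : ℝ := wch c d (2*n) * (d/(c-d))

noncomputable def wgt (n : ℕ) (c d : ℝ) (i : ℕ) : ℝ :=
  if i ≤ 2*n then wch c d i else if i = 2*n+1 then (1-c) * wS n c d else c * wS n c d

noncomputable def wT (n : ℕ) (c d : ℝ) : ℝ := ∑ i ∈ Finset.range (2*n+3), wgt n c d i

noncomputable def pii (n : ℕ) (c d : ℝ) : Fin (2*n+3) → ℝ :=
  fun ω => wgt n c d ω.val / wT n c d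

def AF (n : ℕ) : Finset (Fin (2*n+3)) := Finset.univ.filter (fun ω => InA n ω.val)

def PT (n t : ℕ) : Fin (2*n+3) → Finset (Fin (2*n+3)) :=
  fun ω => Finset.univ.filter (fun ω' => pid n t ω'.val = pid n t ω.val)

def QT (n t : ℕ) : Fin (2*n+3) → Finset (Fin (2*n+3)) :=
  fun ω => Finset.univ.filter (fun ω' => qid n t ω'.val = qid n t ω.val)

noncomputable def dec (c d : ℝ) (k : ℕ) : ℝ :=
  if k = 0 then 0 else if k = 1 then 1 else if k = 2 then c else d

section vals

variable {n : ℕ} {c d : ℝ}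

lemma wch_pos (hc0 : 0 < c) (hc1 : c < 1) (hd0 : 0 < d) (hd1 : d < 1) (i : ℕ) :
    0 < wch c d i := by
  induction i with
  | zero => norm_num [wch]
  | succ i ih =>
      have h1 : 0 < d/(1-d) := div_pos hd0 (by linarith)
      have h2 : 0 < (1-c)/c := div_pos (by linarith) hc0
      rw [wch]
      split_ifs
      · exact mul_pos ih h1
      · exact mul_pos ih h2

lemma wch_succ_even (h : i % 2 = 0) : wch c d (i+1) = wch c d i * (d/(1-d)) := by
  rw [wch, if_pos h]

lemma wch_succ_odd (h : i % 2 = 1) : wch c d (i+1) = wch c d i * ((1-c)/c) := by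
  rw [wch, if_neg (by omega)]

lemma wS_pos (hc0 : 0 < c) (hc1 : c < 1) (hd0 : 0 < d) (hdc : d < c) :
    0 < wS n c d :=
  mul_pos (wch_pos hc0 hc1 hd0 (hdc.trans hc1) _) (div_pos hd0 (by linarith))

lemma wgt_pos (hc0 : 0 < c) (hc1 : c < 1) (hd0 : 0 < d) (hdc : d < c) (i : ℕ) :
    0 < wgt n c d i := by
  have hd1 : d < 1 := hdc.trans hc1
  unfold wgt
  split_ifs
  · exact wch_pos hc0 hc1 hd0 hd1 _
  · exact mul_pos (by linarith) (wS_pos hc0 hc1 hd0 hdc)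
  · exact mul_pos hc0 (wS_pos hc0 hc1 hd0 hdc)

lemma wT_pos (hc0 : 0 < c) (hc1 : c < 1) (hd0 : 0 < d) (hdc : d < c) :
    0 < wT n c d :=
  Finset.sum_pos (fun i _ => wgt_pos hc0 hc1 hd0 hdc i) (by simp)

lemma mass_filter (f : ℕ → ℝ) (S : Finset ℕ) (hS : ∀ i ∈ S, i < 2*n+3) :
    mass (fun ω : Fin (2*n+3) => f ω.val) (Finset.univ.filter (fun ω => ω.val ∈ S))
      = ∑ i ∈ S, f i := by
  unfold mass
  rw [Finset.sum_filter]
  rw [Fin.sum_univ_eq_sum_range (fun k => if k ∈ S then f k else 0) (2*n+3)]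
  rw [Finset.sum_ite_mem]
  congr 1
  exact Finset.inter_eq_right.mpr (fun i hi => Finset.mem_range.mpr (hS i hi))

lemma opin_eq (hT : wT n c d ≠ 0) (C : Fin (2*n+3) → Finset (Fin (2*n+3)))
    (ω : Fin (2*n+3)) (S : Finset ℕ) (hS : ∀ i ∈ S, i < 2*n+3)
    (hcell : C ω = Finset.univ.filter (fun ω' => ω'.val ∈ S)) :
    opin (pii n c d) (AF n) C ω
      = (∑ i ∈ S.filter (InA n), wgt n c d i) / (∑ i ∈ S, wgt n c d i) := by
  unfold opin
  have h1 : C ω ∩ AF n = Finset.univ.filter (fun ω' => ω'.val ∈ S.filter (InA n)) := by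
    ext x
    simp only [hcell, AF, Finset.mem_inter, Finset.mem_filter, Finset.mem_univ, true_and]
  have e1 : mass (pii n c d) (Finset.univ.filter (fun ω' : Fin (2*n+3) => ω'.val ∈ S))
      = ∑ i ∈ S, wgt n c d i / wT n c d :=
    mass_filter (fun k => wgt n c d k / wT n c d) S hS
  have e2 : mass (pii n c d)
        (Finset.univ.filter (fun ω' : Fin (2*n+3) => ω'.val ∈ S.filter (InA n)))
      = ∑ i ∈ S.filter (InA n), wgt n c d i / wT n c d :=
    mass_filter (fun k => wgt n c d k / wT n c d) _
      (fun i hi => hS i (Finset.mem_filter.mp hi).1)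
  rw [h1, hcell, e1, e2, ← Finset.sum_div, ← Finset.sum_div, div_div_div_comm,
    div_self hT, div_one]

end vals

end RDaux

namespace RDaux

open RationalDialogues

variable {n : ℕ} {c d : ℝ}

-- cell identification lemmas
lemma PT_single {t : ℕ} (ω : Fin (2*n+3))
    (h : ω.val = 0 ∨ (ω.val ≤ 2*n ∧ pbase ω.val + 1 ≤ t)) :
    PT n t ω = Finset.univ.filter (fun ω' => ω'.val ∈ ({ω.val} : Finset ℕ)) := by
  ext x
  simp only [PT, Finset.mem_filter, Finset.mem_univ, true_and, Finset.mem_singleton]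
  have hx := x.isLt
  have hω := ω.isLt
  revert h
  unfold pid pbase
  split_ifs <;> first | omega | (simp only [false_iff, iff_false]; omega)

lemma PT_pair {t : ℕ} (ω : Fin (2*n+3)) (h0 : ω.val ≠ 0) (h2 : ω.val ≤ 2*n)
    (ht : ¬ pbase ω.val + 1 ≤ t) :
    PT n t ω = Finset.univ.filter
      (fun ω' => ω'.val ∈ ({pbase ω.val, pbase ω.val + 1} : Finset ℕ)) := by
  ext x
  simp only [PT, Finset.mem_filter, Finset.mem_univ, true_and, Finset.mem_insert,
    Finset.mem_singleton]
  have hx := x.isLt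
  have hω := ω.isLt
  revert ht
  unfold pid pbase
  split_ifs <;> first | omega | (simp only [false_iff, iff_false]; omega)

lemma PT_top {t : ℕ} (ω : Fin (2*n+3)) (h2 : ¬ ω.val ≤ 2*n) :
    PT n t ω = Finset.univ.filter
      (fun ω' => ω'.val ∈ ({2*n+1, 2*n+2} : Finset ℕ)) := by
  ext x
  simp only [PT, Finset.mem_filter, Finset.mem_univ, true_and, Finset.mem_insert,
    Finset.mem_singleton]
  have hx := x.isLt
  have hω := ω.isLt
  revert h2
  unfold pid pbase
  split_ifs <;> first | omega | (simp only [false_iff, iff_false]; omega)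

lemma QT_single {t : ℕ} (hn : 0 < n) (ω : Fin (2*n+3))
    (h : (ω.val ≤ 2*n-1 ∧ qbase ω.val + 1 ≤ t) ∨ (ω.val = 2*n ∧ 2*n+1 ≤ t)) :
    QT n t ω = Finset.univ.filter (fun ω' => ω'.val ∈ ({ω.val} : Finset ℕ)) := by
  ext x
  simp only [QT, Finset.mem_filter, Finset.mem_univ, true_and, Finset.mem_singleton]
  have hx := x.isLt
  have hω := ω.isLt
  revert h
  unfold qid qbase
  split_ifs <;> first | omega | (simp only [false_iff, iff_false]; omega)

lemma QT_pair {t : ℕ} (hn : 0 < n) (ω : Fin (2*n+3)) (h2 : ω.val ≤ 2*n-1)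
    (ht : ¬ qbase ω.val + 1 ≤ t) :
    QT n t ω = Finset.univ.filter
      (fun ω' => ω'.val ∈ ({qbase ω.val, qbase ω.val + 1} : Finset ℕ)) := by
  ext x
  simp only [QT, Finset.mem_filter, Finset.mem_univ, true_and, Finset.mem_insert,
    Finset.mem_singleton]
  have hx := x.isLt
  have hω := ω.isLt
  revert ht
  unfold qid qbase
  split_ifs <;> first | omega | (simp only [false_iff, iff_false]; omega)

lemma QT_bw {t : ℕ} (hn : 0 < n) (ω : Fin (2*n+3)) (h2 : 2*n+1 ≤ ω.val)
    (ht : 2*n+1 ≤ t) :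
    QT n t ω = Finset.univ.filter
      (fun ω' => ω'.val ∈ ({2*n+1, 2*n+2} : Finset ℕ)) := by
  ext x
  simp only [QT, Finset.mem_filter, Finset.mem_univ, true_and, Finset.mem_insert,
    Finset.mem_singleton]
  have hx := x.isLt
  have hω := ω.isLt
  revert ht
  unfold qid qbase
  split_ifs <;> first | omega | (simp only [false_iff, iff_false]; omega)

lemma QT_triple {t : ℕ} (hn : 0 < n) (ω : Fin (2*n+3)) (h2 : ¬ ω.val ≤ 2*n-1)
    (ht : ¬ 2*n+1 ≤ t) :
    QT n t ω = Finset.univ.filter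
      (fun ω' => ω'.val ∈ ({2*n, 2*n+1, 2*n+2} : Finset ℕ)) := by
  ext x
  simp only [QT, Finset.mem_filter, Finset.mem_univ, true_and, Finset.mem_insert,
    Finset.mem_singleton]
  have hx := x.isLt
  have hω := ω.isLt
  revert ht h2
  unfold qid qbase
  split_ifs <;> first | omega | (simp only [false_iff, iff_false]; omega)

end RDaux

namespace RDaux

open RationalDialogues

variable {n : ℕ} {c d : ℝ}

lemma opinP (hn : 0 < n) (hc0 : 0 < c) (hc1 : c < 1) (hd0 : 0 < d) (hdc : d < c)
    (t : ℕ) (ω : Fin (2*n+3)) :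
    opin (pii n c d) (AF n) (PT n t) ω = dec c d (pcode n t ω.val) := by
  have hd1 : d < 1 := hdc.trans hc1
  have hT : wT n c d ≠ 0 := (wT_pos hc0 hc1 hd0 hdc).ne'
  have hω := ω.isLt
  by_cases h1 : ω.val = 0 ∨ (ω.val ≤ 2*n ∧ pbase ω.val + 1 ≤ t)
  · -- singleton cell
    have hle : ω.val ≤ 2*n := by unfold pbase at h1; omega
    rw [opin_eq hT _ ω {ω.val} (by intro i hi; simp at hi; omega) (PT_single ω h1)]
    have hcode : pcode n t ω.val = ω.val % 2 := by unfold pcode; rw [if_pos h1]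
    rw [hcode]
    rcases Nat.mod_two_eq_zero_or_one ω.val with h2 | h2
    · have hA : ¬ InA n ω.val := by unfold InA; omega
      rw [Finset.filter_singleton, if_neg hA]
      simp [dec, h2]
    · have hA : InA n ω.val := by unfold InA; omega
      rw [Finset.filter_singleton, if_pos hA, Finset.sum_singleton,
        div_self (wgt_pos hc0 hc1 hd0 hdc _).ne']
      simp [dec, h2]
  · have hcode : pcode n t ω.val = 2 := by unfold pcode; rw [if_neg h1]
    rw [hcode]
    by_cases h2 : ω.val ≤ 2*n
    · -- chain pair cell {o, o+1}, o odd
      have h0 : ω.val ≠ 0 := fun h => h1 (Or.inl h)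
      have ht : ¬ pbase ω.val + 1 ≤ t := fun h => h1 (Or.inr ⟨h2, h⟩)
      set o := pbase ω.val with ho
      have hof : o % 2 = 1 ∧ o + 1 ≤ 2*n := by rw [ho]; unfold pbase; omega
      rw [opin_eq hT _ ω {o, o+1} (by intro i hi; simp at hi; omega) (PT_pair ω h0 h2 ht)]
      have hAo : InA n o := by unfold InA; omega
      have hAo1 : ¬ InA n (o+1) := by unfold InA; omega
      have hfil : ({o, o+1} : Finset ℕ).filter (InA n) = {o} := by
        rw [Finset.filter_insert, if_pos hAo, Finset.filter_singleton, if_neg hAo1]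
        rfl
      rw [hfil, Finset.sum_singleton, Finset.sum_pair (by omega : o ≠ o+1)]
      have hwo : wgt n c d o = wch c d o := by unfold wgt; rw [if_pos (by omega : o ≤ 2*n)]
      have hwo1 : wgt n c d (o+1) = wch c d o * ((1-c)/c) := by
        unfold wgt; rw [if_pos (by omega : o+1 ≤ 2*n), wch_succ_odd hof.1]
      rw [hwo, hwo1]
      have hw : 0 < wch c d o := wch_pos hc0 hc1 hd0 hd1 o
      have hden : 0 < wch c d o + wch c d o * ((1-c)/c) := by
        have : 0 < (1-c)/c := div_pos (by linarith) hc0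
        have := mul_pos hw this
        linarith
      rw [div_eq_iff hden.ne']
      have hdec : dec c d 2 = c := by simp [dec]
      rw [hdec]
      have hcne : c ≠ 0 := hc0.ne'
      field_simp
      ring
    · -- top pair {b, w}
      rw [opin_eq hT _ ω {2*n+1, 2*n+2} (by intro i hi; simp at hi; omega) (PT_top ω h2)]
      have hA1 : ¬ InA n (2*n+1) := by unfold InA; omega
      have hA2 : InA n (2*n+2) := by unfold InA; omega
      have hfil : ({2*n+1, 2*n+2} : Finset ℕ).filter (InA n) = {2*n+2} := by
        rw [Finset.filter_insert, if_neg hA1, Finset.filter_singleton, if_pos hA2]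
      rw [hfil, Finset.sum_singleton, Finset.sum_pair (by omega : 2*n+1 ≠ 2*n+2)]
      have hw1 : wgt n c d (2*n+1) = (1-c) * wS n c d := by
        unfold wgt; rw [if_neg (by omega), if_pos rfl]
      have hw2 : wgt n c d (2*n+2) = c * wS n c d := by
        unfold wgt; rw [if_neg (by omega), if_neg (by omega)]
      rw [hw1, hw2]
      have hS : 0 < wS n c d := wS_pos hc0 hc1 hd0 hdc
      have hsum : (1-c) * wS n c d + c * wS n c d = wS n c d := by ring
      rw [hsum, mul_div_assoc, div_self hS.ne', mul_one]
      simp [dec]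

lemma opinQ (hn : 0 < n) (hc0 : 0 < c) (hc1 : c < 1) (hd0 : 0 < d) (hdc : d < c)
    (t : ℕ) (ω : Fin (2*n+3)) :
    opin (pii n c d) (AF n) (QT n t) ω = dec c d (qcode n t ω.val) := by
  have hd1 : d < 1 := hdc.trans hc1
  have hT : wT n c d ≠ 0 := (wT_pos hc0 hc1 hd0 hdc).ne'
  have hω := ω.isLt
  by_cases h1 : (ω.val ≤ 2*n-1 ∧ qbase ω.val + 1 ≤ t) ∨ (ω.val = 2*n ∧ 2*n+1 ≤ t)
  · -- singleton cell
    have hle : ω.val ≤ 2*n := by omega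
    rw [opin_eq hT _ ω {ω.val} (by intro i hi; simp at hi; omega) (QT_single hn ω h1)]
    have hcode : qcode n t ω.val = ω.val % 2 := by unfold qcode; rw [if_pos h1]
    rw [hcode]
    rcases Nat.mod_two_eq_zero_or_one ω.val with h2 | h2
    · have hA : ¬ InA n ω.val := by unfold InA; omega
      rw [Finset.filter_singleton, if_neg hA]
      simp [dec, h2]
    · have hA : InA n ω.val := by unfold InA; omega
      rw [Finset.filter_singleton, if_pos hA, Finset.sum_singleton,
        div_self (wgt_pos hc0 hc1 hd0 hdc _).ne']
      simp [dec, h2]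
  · by_cases h2 : ω.val ≤ 2*n-1
    · -- chain pair cell {e, e+1}, e even
      have ht : ¬ qbase ω.val + 1 ≤ t := fun h => h1 (Or.inl ⟨h2, h⟩)
      have hcode : qcode n t ω.val = 3 := by
        unfold qcode; rw [if_neg h1, if_pos h2]
      rw [hcode]
      set e := qbase ω.val with he
      have hef : e % 2 = 0 ∧ e + 1 ≤ 2*n-1 := by rw [he]; unfold qbase; omega
      rw [opin_eq hT _ ω {e, e+1} (by intro i hi; simp at hi; omega) (QT_pair hn ω h2 ht)]
      have hAe : ¬ InA n e := by unfold InA; omega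
      have hAe1 : InA n (e+1) := by unfold InA; omega
      have hfil : ({e, e+1} : Finset ℕ).filter (InA n) = {e+1} := by
        rw [Finset.filter_insert, if_neg hAe, Finset.filter_singleton, if_pos hAe1]
      rw [hfil, Finset.sum_singleton, Finset.sum_pair (by omega : e ≠ e+1)]
      have hwe : wgt n c d e = wch c d e := by unfold wgt; rw [if_pos (by omega : e ≤ 2*n)]
      have hwe1 : wgt n c d (e+1) = wch c d e * (d/(1-d)) := by
        unfold wgt; rw [if_pos (by omega : e+1 ≤ 2*n), wch_succ_even hef.1]
      rw [hwe, hwe1]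
      have hw : 0 < wch c d e := wch_pos hc0 hc1 hd0 hd1 e
      have hden : 0 < wch c d e + wch c d e * (d/(1-d)) := by
        have : 0 < d/(1-d) := div_pos hd0 (by linarith)
        have := mul_pos hw this
        linarith
      rw [div_eq_iff hden.ne']
      have hdec : dec c d 3 = d := by simp [dec]
      rw [hdec]
      have h1d : (1:ℝ) - d ≠ 0 := by linarith
      field_simp
      ring
    · by_cases h3 : 2*n+1 ≤ t
      · -- split top: ω ∈ {2n+1, 2n+2} (since ω = 2n would be singleton)
        have h4 : 2*n+1 ≤ ω.val := by
          rcases Nat.lt_or_ge ω.val (2*n+1) with h | h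
          · exfalso; exact h1 (Or.inr ⟨by omega, h3⟩)
          · exact h
        have hcode : qcode n t ω.val = 2 := by
          unfold qcode; rw [if_neg h1, if_neg h2, if_pos h3]
        rw [hcode]
        rw [opin_eq hT _ ω {2*n+1, 2*n+2} (by intro i hi; simp at hi; omega) (QT_bw hn ω h4 h3)]
        have hA1 : ¬ InA n (2*n+1) := by unfold InA; omega
        have hA2 : InA n (2*n+2) := by unfold InA; omega
        have hfil : ({2*n+1, 2*n+2} : Finset ℕ).filter (InA n) = {2*n+2} := by
          rw [Finset.filter_insert, if_neg hA1, Finset.filter_singleton, if_pos hA2]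
        rw [hfil, Finset.sum_singleton, Finset.sum_pair (by omega : 2*n+1 ≠ 2*n+2)]
        have hw1 : wgt n c d (2*n+1) = (1-c) * wS n c d := by
          unfold wgt; rw [if_neg (by omega), if_pos rfl]
        have hw2 : wgt n c d (2*n+2) = c * wS n c d := by
          unfold wgt; rw [if_neg (by omega), if_neg (by omega)]
        rw [hw1, hw2]
        have hS : 0 < wS n c d := wS_pos hc0 hc1 hd0 hdc
        have hsum : (1-c) * wS n c d + c * wS n c d = wS n c d := by ring
        rw [hsum, mul_div_assoc, div_self hS.ne', mul_one]
        simp [dec]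
      · -- triple {a, b, w}
        have hcode : qcode n t ω.val = 3 := by
          unfold qcode; rw [if_neg h1, if_neg h2, if_neg h3]
        rw [hcode]
        rw [opin_eq hT _ ω {2*n, 2*n+1, 2*n+2} (by intro i hi; simp at hi; omega)
          (QT_triple hn ω h2 h3)]
        have hA0 : ¬ InA n (2*n) := by unfold InA; omega
        have hA1 : ¬ InA n (2*n+1) := by unfold InA; omega
        have hA2 : InA n (2*n+2) := by unfold InA; omega
        have hfil : ({2*n, 2*n+1, 2*n+2} : Finset ℕ).filter (InA n) = {2*n+2} := by
          rw [Finset.filter_insert, if_neg hA0, Finset.filter_insert, if_neg hA1,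
            Finset.filter_singleton, if_pos hA2]
        rw [hfil, Finset.sum_singleton]
        have hsum3 : ∑ i ∈ ({2*n, 2*n+1, 2*n+2} : Finset ℕ), wgt n c d i
            = wgt n c d (2*n) + (wgt n c d (2*n+1) + wgt n c d (2*n+2)) := by
          rw [Finset.sum_insert (by simp only [Finset.mem_insert, Finset.mem_singleton]; omega), Finset.sum_pair (by omega : 2*n+1 ≠ 2*n+2)]
        rw [hsum3]
        have hw0 : wgt n c d (2*n) = wch c d (2*n) := by unfold wgt; rw [if_pos (le_refl _)]
        have hw1 : wgt n c d (2*n+1) = (1-c) * wS n c d := by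
          unfold wgt; rw [if_neg (by omega), if_pos rfl]
        have hw2 : wgt n c d (2*n+2) = c * wS n c d := by
          unfold wgt; rw [if_neg (by omega), if_neg (by omega)]
        rw [hw0, hw1, hw2]
        have hdec : dec c d 3 = d := by simp [dec]
        rw [hdec]
        have hw : 0 < wch c d (2*n) := wch_pos hc0 hc1 hd0 hd1 _
        unfold wS
        have hcd : c - d ≠ 0 := by linarith
        have hden : wch c d (2*n) + ((1-c) * (wch c d (2*n) * (d/(c-d))) +
            c * (wch c d (2*n) * (d/(c-d)))) ≠ 0 := by
          have h5 : 0 < d/(c-d) := div_pos hd0 (by linarith)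
          have h6 : (1-c) * (wch c d (2*n) * (d/(c-d))) + c * (wch c d (2*n) * (d/(c-d)))
              = wch c d (2*n) * (d/(c-d)) := by ring
          rw [h6]
          have := mul_pos hw h5
          linarith
        rw [div_eq_iff hden]
        field_simp
        ring

end RDaux

namespace RDaux

open RationalDialogues

variable {n : ℕ} {c d : ℝ}

lemma dec_inj (hc0 : 0 < c) (hc1 : c < 1) (hd0 : 0 < d) (hdc : d < c)
    {x y : ℕ} (hx : x ≤ 3) (hy : y ≤ 3) :
    dec c d x = dec c d y ↔ x = y := by
  have hd1 : d < 1 := hdc.trans hc1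
  constructor
  · intro h
    interval_cases x <;> interval_cases y <;> simp_all [dec] <;> linarith
  · rintro rfl; rfl

lemma isPartition_fiber {m : ℕ} (f : Fin m → ℕ) :
    IsPartition (fun ω => Finset.univ.filter (fun ω' => f ω' = f ω)) := by
  constructor
  · intro ω; simp
  · intro ω ω' h
    simp only [Finset.mem_filter, Finset.mem_univ, true_and] at h
    simp only [h]

lemma pSpeaksAt_true (t : ℕ) : pSpeaksAt true t ↔ Even t := by
  simp [pSpeaksAt]

lemma partsAt_eq (hn : 0 < n) (hc0 : 0 < c) (hc1 : c < 1) (hd0 : 0 < d) (hdc : d < c)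
    (t : ℕ) :
    partsAt (pii n c d) (AF n) (PT n 0) (QT n 0) true t = (PT n t, QT n t) := by
  induction t with
  | zero => rfl
  | succ t ih =>
      rw [partsAt]
      rw [ih]
      rcases Nat.even_or_odd t with ht | ht
      · have hsp : pSpeaksAt true t := (pSpeaksAt_true t).mpr ht
        rw [if_pos hsp]
        have ht2 : t % 2 = 0 := Nat.even_iff.mp ht
        have hP : PT n (t+1) = PT n t := by
          funext ω
          unfold PT
          simp only [pid_even_stable ht2]
        rw [hP]
        refine Prod.ext rfl ?_
        show refineBy (pii n c d) (AF n) (PT n t) (QT n t) = QT n (t+1)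
        funext ω
        unfold refineBy
        ext x
        simp only [QT, Finset.mem_filter, Finset.mem_univ, true_and]
        rw [opinP hn hc0 hc1 hd0 hdc t x, opinP hn hc0 hc1 hd0 hdc t ω,
          dec_inj hc0 hc1 hd0 hdc (pcode_le n t x.val) (pcode_le n t ω.val)]
        exact (evenStep hn ht2 ω.isLt x.isLt).symm
      · have hsp : ¬ pSpeaksAt true t := by
          rw [pSpeaksAt_true]; exact (Nat.not_even_iff_odd.mpr ht)
        rw [if_neg hsp]
        have ht2 : t % 2 = 1 := Nat.odd_iff.mp ht
        have hQ : QT n (t+1) = QT n t := by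
          funext ω
          unfold QT
          simp only [qid_odd_stable ht2]
        rw [hQ]
        refine Prod.ext ?_ rfl
        show refineBy (pii n c d) (AF n) (QT n t) (PT n t) = PT n (t+1)
        funext ω
        unfold refineBy
        ext x
        simp only [PT, Finset.mem_filter, Finset.mem_univ, true_and]
        rw [opinQ hn hc0 hc1 hd0 hdc t x, opinQ hn hc0 hc1 hd0 hdc t ω,
          dec_inj hc0 hc1 hd0 hdc (qcode_le n t x.val) (qcode_le n t ω.val)]
        exact (oddStep hn ht2 ω.isLt x.isLt).symm

theorem core (hn : 0 < n) (hc0 : 0 < c) (hc1 : c < 1) (hd0 : 0 < d) (hdc : d < c) :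
    ∃ (Ω : Type) (_ : Fintype Ω) (_ : DecidableEq Ω) (π : Ω → ℝ) (A : Finset Ω)
      (P Q : Ω → Finset Ω) (pFirst : Bool) (ω₀ : Ω),
      IsBOF π P Q ∧
      (∀ k, k < 2 * n →
        dialogue π A P Q pFirst ω₀ k = if Even k then c else d) ∧
      (∀ k, 2 * n ≤ k → dialogue π A P Q pFirst ω₀ k = c) := by
  have hd1 : d < 1 := hdc.trans hc1
  have hT : 0 < wT n c d := wT_pos hc0 hc1 hd0 hdc
  refine ⟨Fin (2*n+3), inferInstance, inferInstance, pii n c d, AF n, PT n 0, QT n 0,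
    true, ⟨2*n+2, by omega⟩, ?_, ?_, ?_⟩
  · refine ⟨fun ω => div_pos (wgt_pos hc0 hc1 hd0 hdc _) hT, ?_, ?_, ?_⟩
    · unfold pii
      rw [Fin.sum_univ_eq_sum_range (fun k => wgt n c d k / wT n c d) (2*n+3),
        ← Finset.sum_div]
      exact div_self hT.ne'
    · exact isPartition_fiber _
    · exact isPartition_fiber _
  · intro k hk
    unfold dialogue
    rcases Nat.even_or_odd k with h | h
    · rw [if_pos ((pSpeaksAt_true k).mpr h), partsAt_eq hn hc0 hc1 hd0 hdc k]
      rw [opinP hn hc0 hc1 hd0 hdc k ⟨2*n+2, by omega⟩]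
      have : pcode n k (2*n+2) = 2 := by unfold pcode pbase; split_ifs <;> first | omega | (simp only [false_or, false_and, false_iff, iff_false] at *; omega)
      rw [this, if_pos h]
      simp [dec]
    · rw [if_neg (by rw [pSpeaksAt_true]; exact Nat.not_even_iff_odd.mpr h),
        partsAt_eq hn hc0 hc1 hd0 hdc k]
      rw [opinQ hn hc0 hc1 hd0 hdc k ⟨2*n+2, by omega⟩]
      have hk2 : k % 2 = 1 := Nat.odd_iff.mp h
      have : qcode n k (2*n+2) = 3 := by unfold qcode qbase; split_ifs <;> first | omega | (simp only [false_or, false_and, false_iff, iff_false] at *; omega)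
      rw [this, if_neg (Nat.not_even_iff_odd.mpr h)]
      simp [dec]
  · intro k hk
    unfold dialogue
    rcases Nat.even_or_odd k with h | h
    · rw [if_pos ((pSpeaksAt_true k).mpr h), partsAt_eq hn hc0 hc1 hd0 hdc k]
      rw [opinP hn hc0 hc1 hd0 hdc k ⟨2*n+2, by omega⟩]
      have : pcode n k (2*n+2) = 2 := by unfold pcode pbase; split_ifs <;> first | omega | (simp only [false_or, false_and, false_iff, iff_false] at *; omega)
      rw [this]
      simp [dec]
    · rw [if_neg (by rw [pSpeaksAt_true]; exact Nat.not_even_iff_odd.mpr h),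
        partsAt_eq hn hc0 hc1 hd0 hdc k]
      rw [opinQ hn hc0 hc1 hd0 hdc k ⟨2*n+2, by omega⟩]
      have hk2 : k % 2 = 1 := Nat.odd_iff.mp h
      have : qcode n k (2*n+2) = 2 := by unfold qcode qbase; split_ifs <;> first | omega | (simp only [false_or, false_and, false_iff, iff_false] at *; omega)
      rw [this]
      simp [dec]

end RDaux

namespace RDaux

open RationalDialogues

section compl

variable {Ω : Type} [Fintype Ω] [DecidableEq Ω] {π : Ω → ℝ} {A : Finset Ω}
  {C D P Q : Ω → Finset Ω}

lemma mass_pos (hpos : ∀ ω, 0 < π ω) {s : Finset Ω} (h : s.Nonempty) :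
    0 < mass π s :=
  Finset.sum_pos (fun i _ => hpos i) h

lemma mass_compl (s : Finset Ω) :
    mass π (s ∩ Aᶜ) = mass π s - mass π (s ∩ A) := by
  have h1 : s ∩ Aᶜ = s \ (s ∩ A) := by
    ext x
    simp only [Finset.mem_inter, Finset.mem_compl, Finset.mem_sdiff]
    tauto
  rw [h1]
  unfold mass
  rw [Finset.sum_sdiff_eq_sub Finset.inter_subset_left]

lemma opin_compl (hpos : ∀ ω, 0 < π ω) {ω : Ω} (h : ω ∈ C ω) :
    opin π Aᶜ C ω = 1 - opin π A C ω := by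
  unfold opin
  rw [mass_compl]
  have hm : 0 < mass π (C ω) := mass_pos hpos ⟨ω, h⟩
  field_simp

lemma refineBy_compl (hpos : ∀ ω, 0 < π ω) (hC : IsPartition C) :
    refineBy π Aᶜ C D = refineBy π A C D := by
  funext ω
  unfold refineBy
  apply Finset.filter_congr
  intro x _
  rw [opin_compl hpos (hC.1 x), opin_compl hpos (hC.1 ω)]
  constructor
  · intro h; linarith
  · intro h; linarith

lemma refineBy_isPartition (hD : IsPartition D) :
    IsPartition (refineBy π A C D) := by
  constructor
  · intro ω
    unfold refineBy
    exact Finset.mem_filter.mpr ⟨hD.1 ω, rfl⟩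
  · intro ω ω' h
    unfold refineBy at h ⊢
    simp only [Finset.mem_filter] at h
    rw [hD.2 ω ω' h.1, h.2]

lemma partsAt_isPartition (hP : IsPartition P) (hQ : IsPartition Q) (b : Bool) (t : ℕ) :
    IsPartition (partsAt π A P Q b t).1 ∧ IsPartition (partsAt π A P Q b t).2 := by
  induction t with
  | zero => exact ⟨hP, hQ⟩
  | succ t ih =>
      rw [partsAt]
      by_cases h : pSpeaksAt b t
      · rw [if_pos h]
        exact ⟨ih.1, refineBy_isPartition ih.2⟩
      · rw [if_neg h]
        exact ⟨refineBy_isPartition ih.1, ih.2⟩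

lemma partsAt_compl (hpos : ∀ ω, 0 < π ω) (hP : IsPartition P) (hQ : IsPartition Q)
    (b : Bool) (t : ℕ) :
    partsAt π Aᶜ P Q b t = partsAt π A P Q b t := by
  induction t with
  | zero => rfl
  | succ t ih =>
      rw [partsAt, partsAt, ih]
      by_cases h : pSpeaksAt b t
      · rw [if_pos h, if_pos h,
          refineBy_compl hpos (partsAt_isPartition hP hQ b t).1]
      · rw [if_neg h, if_neg h,
          refineBy_compl hpos (partsAt_isPartition hP hQ b t).2]

lemma dialogue_compl (hpos : ∀ ω, 0 < π ω) (hP : IsPartition P) (hQ : IsPartition Q)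
    (b : Bool) (ω₀ : Ω) (t : ℕ) :
    dialogue π Aᶜ P Q b ω₀ t = 1 - dialogue π A P Q b ω₀ t := by
  unfold dialogue
  by_cases h : pSpeaksAt b t
  · rw [if_pos h, if_pos h, partsAt_compl hpos hP hQ,
      opin_compl hpos ((partsAt_isPartition hP hQ b t).1.1 ω₀)]
  · rw [if_neg h, if_neg h, partsAt_compl hpos hP hQ,
      opin_compl hpos ((partsAt_isPartition hP hQ b t).2.1 ω₀)]

end compl

end RDaux

open RationalDialogues


/-- For every positive `n` and `c ≠ d` in `(0,1)`, there is
a Bayesian opinion framework and a fixed state whose dialogue alternates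
`(c, d, c, d, …)` for `n` full alternations and then suddenly reaches
consensus at `c` forever after.
(0-indexed: the opinion at time `k < 2n` is `c` for even `k` and `d` for odd
`k`, and is `c` for all `k ≥ 2n`.) -/
theorem obstinate_alternation_then_consensus
    (n : ℕ) (hn : 0 < n) (c d : ℝ)
    (hc : 0 < c ∧ c < 1) (hd : 0 < d ∧ d < 1) (hcd : c ≠ d) :
    ∃ (Ω : Type) (_ : Fintype Ω) (_ : DecidableEq Ω) (π : Ω → ℝ) (A : Finset Ω)
      (P Q : Ω → Finset Ω) (pFirst : Bool) (ω₀ : Ω),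
      IsBOF π P Q ∧
      (∀ k, k < 2 * n →
        dialogue π A P Q pFirst ω₀ k = if Even k then c else d) ∧
      (∀ k, 2 * n ≤ k → dialogue π A P Q pFirst ω₀ k = c) := by
  obtain ⟨hc0, hc1⟩ := hc
  obtain ⟨hd0, hd1⟩ := hd
  rcases lt_or_gt_of_ne hcd with hlt | hgt
  · -- c < d : use the complement of the core construction for (1-c, 1-d)
    obtain ⟨Ω, i1, i2, π, A, P, Q, b, ω₀, hbof, h1, h2⟩ :=
      RDaux.core hn (by linarith : (0:ℝ) < 1-c) (by linarith : (1:ℝ)-c < 1)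
        (by linarith : (0:ℝ) < 1-d) (by linarith : (1:ℝ)-d < 1-c)
    refine ⟨Ω, i1, i2, π, Aᶜ, P, Q, b, ω₀, hbof, ?_, ?_⟩
    · intro k hk
      rw [RDaux.dialogue_compl hbof.1 hbof.2.2.1 hbof.2.2.2 b ω₀ k, h1 k hk]
      by_cases h : Even k
      · rw [if_pos h, if_pos h]; ring
      · rw [if_neg h, if_neg h]; ring
    · intro k hk
      rw [RDaux.dialogue_compl hbof.1 hbof.2.2.1 hbof.2.2.2 b ω₀ k, h2 k hk]
      ring
  · exact RDaux.core hn hc0 hc1 hd0 hgt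
end

section
/- For every positive even integer n and all real numbers a, b with 0 < a < 1, 0 < b < 1, and a ≠ b, there exists a Bayesian opinion framework and a fixed state ω* whose Bayesian dialogue has opinion sequence (a, a, …, a, b, b, b, …): both agents announce the same opinion a for the first n periods (apparent agreement), and then the opinions suddenly jump to consensus at b for all subsequent times. -/
open RationalDialogues

/-! Each state is a node of a path together with a bit recording `A`. Agent p's cells are pairs
of adjacent nodes, and agent q's cells are the interlaced pairs plus one singleton at each end.
The conditional probability of `A` is `a` on every pair but differs from `a` at every node, and
from its value at the neighbouring nodes. So an agent's pair splits exactly when a neighbouring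
pair of the other agent split at the previous announcement: information travels inwards from the
two ends, one edge per period, and reaches the node of probability `b` only at time `n`. -/

namespace RationalDialogues

open Finset

section Rescaling

variable {Ω : Type} [Fintype Ω]

lemma opin_div_const [DecidableEq Ω] (ρ : Ω → ℝ) {c : ℝ} (hc : c ≠ 0) (A : Finset Ω) :
    opin (fun ω => ρ ω / c) A = opin ρ A := by
  funext C ω
  simp only [opin, mass, ← sum_div]
  exact div_div_div_cancel_right₀ hc _ _

lemma partsAt_eq_of_opin_eq [DecidableEq Ω] {π π' : Ω → ℝ} {A : Finset Ω}
    (h : opin π A = opin π' A) (P Q : Ω → Finset Ω) (pFirst : Bool) :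
    partsAt π A P Q pFirst = partsAt π' A P Q pFirst := by
  have hrefine : refineBy π A = refineBy π' A := by
    funext C D
    unfold refineBy
    rw [h]
  funext s
  induction s with
  | zero => rfl
  | succ s ih => rw [partsAt, partsAt, ih, hrefine]

lemma dialogue_eq_of_opin_eq [DecidableEq Ω] {π π' : Ω → ℝ} {A : Finset Ω}
    (h : opin π A = opin π' A) : dialogue π A = dialogue π' A := by
  funext P Q pFirst ω₀ s
  simp only [dialogue, partsAt_eq_of_opin_eq h, h]

lemma isBOF_div_sum {ρ : Ω → ℝ} (hρ : ∀ ω, 0 < ρ ω) [Nonempty Ω] {P Q : Ω → Finset Ω}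
    (hP : IsPartition P) (hQ : IsPartition Q) : IsBOF (fun ω => ρ ω / ∑ ω', ρ ω') P Q := by
  have hsum : 0 < ∑ ω', ρ ω' := sum_pos (fun ω _ => hρ ω) univ_nonempty
  exact ⟨fun ω => div_pos (hρ ω) hsum, by rw [← sum_div, div_self hsum.ne'], hP, hQ⟩

end Rescaling

section Lift

variable {V : Type}

def bernoulliPrior (q w : V → ℝ) (ω : V × Bool) : ℝ :=
  (if ω.2 then q ω.1 else 1 - q ω.1) * w ω.1

lemma bernoulliPrior_pos {q w : V → ℝ} (hq : ∀ v, 0 < q v ∧ q v < 1) (hw : ∀ v, 0 < w v)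
    (ω : V × Bool) : 0 < bernoulliPrior q w ω := by
  have := hq ω.1
  unfold bernoulliPrior
  split_ifs
  · exact mul_pos this.1 (hw ω.1)
  · exact mul_pos (by linarith) (hw ω.1)

variable [Fintype V]

def liftCells (c : V → Finset V) (ω : V × Bool) : Finset (V × Bool) :=
  c ω.1 ×ˢ univ

lemma isPartition_liftCells {c : V → Finset V} (hc : IsPartition c) :
    IsPartition (liftCells c) := by
  refine ⟨fun ω => mem_product.2 ⟨hc.1 ω.1, mem_univ _⟩, fun ω ω' h => ?_⟩
  simp only [liftCells, hc.2 ω.1 ω'.1 (mem_product.1 h).1]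

lemma opin_bernoulliPrior_liftCells [DecidableEq V] (q w : V → ℝ) (c : V → Finset V)
    (ω : V × Bool) :
    opin (bernoulliPrior q w) (univ ×ˢ {true}) (liftCells c) ω = (c ω.1).centerMass w q := by
  simp only [opin, mass, liftCells, product_inter_product, inter_univ, univ_inter, sum_product,
    Fintype.sum_bool, sum_singleton, bernoulliPrior, centerMass, smul_eq_mul, if_true,
    Bool.false_eq_true, if_false]
  have hnode : ∀ v, q v * w v + (1 - q v) * w v = w v := fun v => by ring
  rw [sum_congr rfl fun v _ => hnode v, div_eq_inv_mul]
  exact congrArg _ (sum_congr rfl fun v _ => mul_comm _ _)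

lemma refineBy_bernoulliPrior_liftCells [DecidableEq V] (q w : V → ℝ) (c d : V → Finset V) :
    refineBy (bernoulliPrior q w) (univ ×ˢ {true}) (liftCells c) (liftCells d) =
      liftCells fun x => (d x).filter fun y => (c y).centerMass w q = (c x).centerMass w q := by
  funext ω
  ext ω'
  simp only [refineBy, liftCells, opin_bernoulliPrior_liftCells, mem_filter, mem_product,
    mem_univ, and_true]

end Lift

lemma ite_eq_ite_iff_of_ne {α : Type*} {p p' : Prop} [Decidable p] [Decidable p'] {u v c : α}
    (hu : u ≠ c) (hv : v ≠ c) (huv : u ≠ v) :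
    ((if p then u else c) = if p' then v else c) ↔ ¬p ∧ ¬p' := by
  split_ifs <;> simp_all [eq_comm]

section Chain

/-- Nodes `0, …, 2m+1` lie on a path whose edge `e ≤ 2m+2` joins `e - 1` and `e`; edges `0` and
`2m+2` carry a single node. Agent p's cells are the odd edges (parity `r = 1`), agent q's the even
ones (`r = 0`), so the speaker at time `s` owns the edges of parity `s + 1`. `edgeOf r x` is the
edge of parity `r` at `x`. -/
def edgeOf (r x : ℕ) : ℕ := x + (x + r) % 2

/-- Splits propagate inwards from both ends of the path, one edge per period. -/
def revealTime (m e : ℕ) : ℕ := min e (2 * m + 2 - e) + 1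

def chainCell (m r s : ℕ) (x : Fin (2 * m + 2)) : Finset (Fin (2 * m + 2)) :=
  univ.filter fun y => edgeOf r y = edgeOf r x ∧ (revealTime m (edgeOf r x) ≤ s → y = x)

lemma isPartition_chainCell (m r s : ℕ) : IsPartition (chainCell m r s) := by
  refine ⟨fun x => by simp [chainCell], fun x x' hx' => ?_⟩
  simp only [chainCell, mem_filter, mem_univ, true_and] at hx'
  obtain ⟨he, hrev⟩ := hx'
  ext y
  simp only [chainCell, mem_filter, mem_univ, true_and, he]
  by_cases h : revealTime m (edgeOf r x) ≤ s
  · simp [h, hrev h]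
  · simp [h]

lemma chainCell_succ {m r s : ℕ} (hr : r % 2 ≠ s % 2) :
    chainCell m r (s + 1) = chainCell m r s := by
  funext x
  have hx := x.isLt
  have hrev : revealTime m (edgeOf r x) ≤ s + 1 ↔ revealTime m (edgeOf r x) ≤ s := by
    unfold revealTime edgeOf; omega
  simp only [chainCell, hrev]

structure IsChainPrior (a : ℝ) (q w : ℕ → ℝ) : Prop where
  weight_pos : ∀ k, 0 < w k
  ne : ∀ k, q k ≠ a
  pair_balance : ∀ k, (q k - a) * w k + (q (k + 1) - a) * w (k + 1) = 0

variable {a : ℝ} {q w : ℕ → ℝ}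

lemma IsChainPrior.ne_succ (h : IsChainPrior a q w) (k : ℕ) : q k ≠ q (k + 1) := by
  intro heq
  have hsum : (q k - a) * (w k + w (k + 1)) = 0 := by
    linear_combination heq * w (k + 1) + h.pair_balance k
  rcases mul_eq_zero.1 hsum with hq | hw
  · exact h.ne k (sub_eq_zero.1 hq)
  · linarith [h.weight_pos k, h.weight_pos (k + 1)]

lemma IsChainPrior.centerMass_pair (h : IsChainPrior a q w) {N : ℕ} {i j : Fin N}
    (hij : (j : ℕ) = i + 1) :
    ({i, j} : Finset (Fin N)).centerMass (fun x => w x) (fun x => q x) = a := by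
  have hne : i ≠ j := fun h' => by rw [h'] at hij; omega
  have hpos : 0 < w i + w j := add_pos (h.weight_pos _) (h.weight_pos _)
  have hbal := h.pair_balance i
  rw [← hij] at hbal
  rw [Finset.centerMass_pair _ _ _ _ hne, smul_eq_mul, smul_eq_mul]
  field_simp
  linear_combination hbal

lemma edgeOf_of_edgeOf_eq {r r' x y : ℕ} (hrr' : r % 2 ≠ r' % 2) (hyx : y ≠ x)
    (he : edgeOf r' y = edgeOf r' x) :
    edgeOf r' x = max x y ∧
      (edgeOf r x = edgeOf r' x - 1 ∧ edgeOf r y = edgeOf r' x + 1 ∨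
        edgeOf r y = edgeOf r' x - 1 ∧ edgeOf r x = edgeOf r' x + 1) := by
  unfold edgeOf at *
  omega

lemma revealTime_le_succ_iff {m e s : ℕ} (h1 : 1 ≤ e) (h2 : e ≤ 2 * m + 1) :
    revealTime m e ≤ s + 1 ↔ revealTime m (e - 1) ≤ s ∨ revealTime m (e + 1) ≤ s := by
  unfold revealTime
  omega

lemma centerMass_chainCell (h : IsChainPrior a q w) {m r s : ℕ} (hr : r % 2 ≠ s % 2)
    (x : Fin (2 * m + 2)) :
    (chainCell m r s x).centerMass (fun y => w y) (fun y => q y) =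
      if revealTime m (edgeOf r x) ≤ s then q x else a := by
  split_ifs with hrev
  · have hcell : chainCell m r s x = {x} := by
      ext y
      simp only [chainCell, mem_filter, mem_univ, true_and, mem_singleton, hrev, forall_const]
      exact ⟨And.right, fun hy => ⟨hy ▸ rfl, hy⟩⟩
    rw [hcell]
    exact centerMass_singleton x _ (h.weight_pos x).ne'
  · have hx := x.isLt
    have hint : 1 ≤ edgeOf r x ∧ edgeOf r x < 2 * m + 2 := by
      unfold revealTime edgeOf at *; omega
    have hcell : chainCell m r s x = {⟨edgeOf r x - 1, by omega⟩, ⟨edgeOf r x, hint.2⟩} := by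
      ext y
      have hy := y.isLt
      simp only [chainCell, mem_filter, mem_univ, true_and, hrev, false_imp_iff, and_true,
        mem_insert, mem_singleton, Fin.ext_iff]
      unfold edgeOf at *; omega
    rw [hcell]
    exact h.centerMass_pair (by simp only; omega)

lemma filter_chainCell (h : IsChainPrior a q w) {m r r' s : ℕ} (hr : r % 2 ≠ s % 2)
    (hr' : r' % 2 = s % 2) :
    (fun x => (chainCell m r' s x).filter fun y =>
        (chainCell m r s y).centerMass (fun z => w z) (fun z => q z) =
          (chainCell m r s x).centerMass (fun z => w z) (fun z => q z)) =
      chainCell m r' (s + 1) := by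
  funext x
  ext y
  simp only [centerMass_chainCell h hr]
  simp only [chainCell, mem_filter, mem_univ, true_and]
  by_cases hyx : y = x
  · subst hyx; simp
  by_cases he : edgeOf r' y = edgeOf r' x
  swap
  · simp [he]
  have hx := x.isLt
  have hy := y.isLt
  have hyx' : (y : ℕ) ≠ x := fun h' => hyx (Fin.ext h')
  have hadj : (y : ℕ) = x + 1 ∨ (x : ℕ) = y + 1 := by unfold edgeOf at he; omega
  obtain ⟨hmax, hnb⟩ := edgeOf_of_edgeOf_eq (r := r) (by omega) hyx' he
  have hreveal : revealTime m (edgeOf r' x) ≤ s + 1 ↔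
      revealTime m (edgeOf r y) ≤ s ∨ revealTime m (edgeOf r x) ≤ s := by
    rw [revealTime_le_succ_iff (by omega) (by omega)]
    rcases hnb with ⟨h1, h2⟩ | ⟨h1, h2⟩ <;> rw [h1, h2]
    exact or_comm
  have hqyx : q y ≠ q x := by
    rcases hadj with hadj | hadj <;> rw [hadj]
    exacts [(h.ne_succ x).symm, h.ne_succ y]
  rw [ite_eq_ite_iff_of_ne (h.ne y) (h.ne x) hqyx, hreveal]
  simp only [he, hyx, true_and, imp_false]
  have hmono : revealTime m (edgeOf r' x) ≤ s → revealTime m (edgeOf r' x) ≤ s + 1 := by omega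
  rw [hreveal] at hmono
  tauto

lemma revealTime_edgeOf_pred_le_iff {n : ℕ} (hn : 0 < n) (hne : Even n) (s : ℕ) :
    revealTime n (edgeOf (s + 1) (n - 1)) ≤ s ↔ n ≤ s := by
  obtain ⟨t, rfl⟩ := hne
  unfold revealTime edgeOf
  omega

lemma pSpeaksAt_true_iff (s : ℕ) : pSpeaksAt true s ↔ Even s := by
  simp [pSpeaksAt]

lemma partsAt_chain (h : IsChainPrior a q w) (m s : ℕ) :
    partsAt (bernoulliPrior (fun x : Fin (2 * m + 2) => q x) fun x => w x) (univ ×ˢ {true})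
        (liftCells (chainCell m 1 0)) (liftCells (chainCell m 0 0)) true s =
      (liftCells (chainCell m 1 s), liftCells (chainCell m 0 s)) := by
  induction s with
  | zero => rfl
  | succ s ih =>
    rw [partsAt, ih]
    simp only [pSpeaksAt_true_iff, refineBy_bernoulliPrior_liftCells]
    split_ifs with hs
    · have hs2 : s % 2 = 0 := Nat.even_iff.1 hs
      rw [filter_chainCell h (r := 1) (by omega) (by omega), chainCell_succ (r := 1) (by omega)]
    · have hs2 : s % 2 = 1 := Nat.odd_iff.1 (Nat.not_even_iff_odd.1 hs)
      rw [filter_chainCell h (r := 0) (by omega) (by omega), chainCell_succ (r := 0) (by omega)]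

lemma dialogue_chain (h : IsChainPrior a q w) (m : ℕ) (ω₀ : Fin (2 * m + 2) × Bool) (s : ℕ) :
    dialogue (bernoulliPrior (fun x : Fin (2 * m + 2) => q x) fun x => w x) (univ ×ˢ {true})
        (liftCells (chainCell m 1 0)) (liftCells (chainCell m 0 0)) true ω₀ s =
      if revealTime m (edgeOf (s + 1) ω₀.1) ≤ s then q ω₀.1 else a := by
  simp only [dialogue, partsAt_chain h, pSpeaksAt_true_iff, opin_bernoulliPrior_liftCells]
  rcases Nat.even_or_odd s with hs | hs
  · have hedge : edgeOf (s + 1) ω₀.1 = edgeOf 1 ω₀.1 := by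
      rw [Nat.even_iff] at hs; unfold edgeOf; omega
    rw [if_pos hs, hedge, centerMass_chainCell h (by rw [Nat.even_iff] at hs; omega)]
  · have hedge : edgeOf (s + 1) ω₀.1 = edgeOf 0 ω₀.1 := by
      rw [Nat.odd_iff] at hs; unfold edgeOf; omega
    rw [if_neg (Nat.not_even_iff_odd.2 hs), hedge,
      centerMass_chainCell h (by rw [Nat.odd_iff] at hs; omega)]

end Chain

section Construction

variable {a b : ℝ}

def jumpWeight (a : ℝ) (j k : ℕ) : ℝ := if k = j then a * (1 - a) else 1

/-- `(q k - a) * w k = ±(b - a) a (1 - a)` with alternating sign, so adjacent nodes average to `a`,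
and the weight of node `j` is chosen so that `q j = b`. -/
noncomputable def jumpOpinion (a b : ℝ) (j k : ℕ) : ℝ :=
  a + (b - a) * (a * (1 - a)) * (-1) ^ (k + j) / jumpWeight a j k

lemma jumpWeight_pos (ha : 0 < a) (ha1 : a < 1) (j k : ℕ) : 0 < jumpWeight a j k := by
  unfold jumpWeight
  split_ifs
  · exact mul_pos ha (sub_pos.2 ha1)
  · exact one_pos

lemma jumpOpinion_self (ha : 0 < a) (ha1 : a < 1) (j : ℕ) : jumpOpinion a b j j = b := by
  have hw : a * (1 - a) ≠ 0 := (mul_pos ha (sub_pos.2 ha1)).ne'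
  simp only [jumpOpinion, jumpWeight, if_pos, ← two_mul, pow_mul, neg_one_sq, one_pow, mul_one,
    mul_div_cancel_right₀ _ hw]
  ring

lemma jumpOpinion_mem_Ioo (ha : 0 < a) (ha1 : a < 1) (hb : 0 < b) (hb1 : b < 1) (j k : ℕ) :
    0 < jumpOpinion a b j k ∧ jumpOpinion a b j k < 1 := by
  by_cases hk : k = j
  · rw [hk, jumpOpinion_self ha ha1]
    exact ⟨hb, hb1⟩
  have hp : 0 < a * (1 - a) := mul_pos ha (sub_pos.2 ha1)
  have hp1 : a * (1 - a) < 1 - a := by nlinarith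
  simp only [jumpOpinion, jumpWeight, if_neg hk, div_one]
  rcases neg_one_pow_eq_or ℝ (k + j) with hσ | hσ <;> rw [hσ] <;> constructor <;>
    nlinarith [mul_pos hb hp, mul_pos (sub_pos.2 hb1) hp]

lemma jumpOpinion_sub_mul_jumpWeight (ha : 0 < a) (ha1 : a < 1) (j k : ℕ) :
    (jumpOpinion a b j k - a) * jumpWeight a j k = (b - a) * (a * (1 - a)) * (-1) ^ (k + j) := by
  have hw := (jumpWeight_pos ha ha1 j k).ne'
  simp only [jumpOpinion, add_sub_cancel_left]
  field_simp

lemma isChainPrior_jump (ha : 0 < a) (ha1 : a < 1) (hab : a ≠ b) (j : ℕ) :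
    IsChainPrior a (jumpOpinion a b j) (jumpWeight a j) where
  weight_pos := jumpWeight_pos ha ha1 j
  ne k heq := by
    have h := jumpOpinion_sub_mul_jumpWeight (b := b) ha ha1 j k
    rw [heq, sub_self, zero_mul] at h
    have : (b - a) * (a * (1 - a)) * (-1) ^ (k + j) ≠ 0 :=
      mul_ne_zero (mul_ne_zero (sub_ne_zero.2 hab.symm) (mul_pos ha (sub_pos.2 ha1)).ne')
        (pow_ne_zero _ (by norm_num))
    exact this h.symm
  pair_balance k := by
    rw [jumpOpinion_sub_mul_jumpWeight ha ha1, jumpOpinion_sub_mul_jumpWeight ha ha1]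
    ring

end Construction

end RationalDialogues

open Finset

/-- For every positive even `n` and `a ≠ b` in `(0,1)`,
there is a Bayesian opinion framework and a fixed state whose dialogue has
both agents announcing the same opinion `a` for the first `n` periods and
then jumping to consensus at `b` for all subsequent times. -/
theorem apparent_agreement_then_jump
    (n : ℕ) (hn : 0 < n) (hne : Even n) (a b : ℝ)
    (ha : 0 < a ∧ a < 1) (hb : 0 < b ∧ b < 1) (hab : a ≠ b) :
    ∃ (Ω : Type) (_ : Fintype Ω) (_ : DecidableEq Ω) (π : Ω → ℝ) (A : Finset Ω)
      (P Q : Ω → Finset Ω) (pFirst : Bool) (ω₀ : Ω),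
      IsBOF π P Q ∧
      (∀ k, k < n → dialogue π A P Q pFirst ω₀ k = a) ∧
      (∀ k, n ≤ k → dialogue π A P Q pFirst ω₀ k = b) := by
  obtain ⟨ha0, ha1⟩ := ha
  obtain ⟨hb0, hb1⟩ := hb
  have hchain := isChainPrior_jump ha0 ha1 hab (n - 1)
  set ρ := bernoulliPrior (fun x : Fin (2 * n + 2) => jumpOpinion a b (n - 1) x)
    fun x => jumpWeight a (n - 1) x
  have hρ : ∀ ω, 0 < ρ ω := bernoulliPrior_pos
    (fun x => jumpOpinion_mem_Ioo ha0 ha1 hb0 hb1 _ _) (fun x => jumpWeight_pos ha0 ha1 _ _)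
  have hsum : ∑ ω, ρ ω ≠ 0 := (sum_pos (fun ω _ => hρ ω) univ_nonempty).ne'
  have hdialogue (k : ℕ) :
      dialogue (fun ω => ρ ω / ∑ ω', ρ ω') (univ ×ˢ {true}) (liftCells (chainCell n 1 0))
        (liftCells (chainCell n 0 0)) true (⟨n - 1, by omega⟩, true) k =
        if n ≤ k then b else a := by
    rw [dialogue_eq_of_opin_eq (opin_div_const ρ hsum _), dialogue_chain hchain]
    simp only [revealTime_edgeOf_pred_le_iff hn hne, jumpOpinion_self ha0 ha1]
  refine ⟨Fin (2 * n + 2) × Bool, inferInstance, inferInstance, fun ω => ρ ω / ∑ ω', ρ ω',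
    univ ×ˢ {true}, liftCells (chainCell n 1 0), liftCells (chainCell n 0 0), true,
    (⟨n - 1, by omega⟩, true),
    isBOF_div_sum hρ (isPartition_liftCells (isPartition_chainCell n 1 0))
      (isPartition_liftCells (isPartition_chainCell n 0 0)),
    fun k hk => ?_, fun k hk => ?_⟩
  · rw [hdialogue, if_neg (by omega)]
  · rw [hdialogue, if_pos hk]
end
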